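/- arXiv:1710.05411 — 10 statements merged into one kernel-verified Lean document; each statement's English description precedes it below -/
import Mathlib

section
/- The function ĝ is well defined on [0,ν₀] (i.e. 1 ≤ A − B·cosh ν ≤ A − B for ν ∈ [0,ν₀]), satisfies ĝ(0) = 2(K₂ − K₁⋆) and ĝ(ν₀) = 0, is strictly decreasing on [0,ν₀], and is strictly concave on (0,ν₀) (its second derivative is strictly negative there, with ĝ′(ν) = −B·sinh ν / sinh ĝ(ν) on (0,ν₀)). -/
open Real Set Filter Topology

/-!
On `[0, ν₀]` the function `ν ↦ A - B cosh ν` decreases strictly from `A - B = cosh (2(K₂ - K₁⋆))`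
to `1`, so `ĝ = arcosh (A - B cosh ν)` there, which gives the values at the endpoints and the
monotonicity. Differentiating `cosh ĝ = A - B cosh ν` gives `ĝ' = -B sinh ν / sinh ĝ`, and
differentiating once more,
`ĝ'' = -B (cosh ν sinh² ĝ + B sinh² ν cosh ĝ) / sinh³ ĝ < 0` wherever `ĝ > 0`.
-/

theorem hasDerivAt_of_cosh_eq {f g : ℝ → ℝ} {f' x : ℝ}
    (hg : ∀ᶠ y in 𝓝 x, 0 ≤ g y ∧ cosh (g y) = f y) (hf : HasDerivAt f f' x) (hx : 1 < f x) :
    HasDerivAt g (f' / sinh (g x)) x := by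
  have heq : g =ᶠ[𝓝 x] fun y ↦ arcosh (f y) :=
    hg.mono fun y hy ↦ (arcosh_cosh hy.1).symm.trans (congrArg arcosh hy.2)
  have h := (hasDerivAt_arcosh hx).comp x hf
  rw [← sinh_arcosh hx.le, ← heq.eq_of_nhds, ← div_eq_inv_mul] at h
  exact h.congr_of_eventuallyEq heq

theorem deriv_deriv_neg_of_hasDerivAt {g : ℝ → ℝ} {s : Set ℝ} {B ν : ℝ} (hs : s ∈ 𝓝 ν)
    (hB : 0 < B) (hgν : 0 < g ν)
    (hg' : ∀ x ∈ s, HasDerivAt g (-(B * sinh x) / sinh (g x)) x) :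
    deriv (deriv g) ν < 0 := by
  have hsinh : 0 < sinh (g ν) := sinh_pos_iff.2 hgν
  have hderiv : deriv g =ᶠ[𝓝 ν] fun x ↦ -(B * sinh x) / sinh (g x) :=
    eventually_of_mem hs fun x hx ↦ (hg' x hx).deriv
  have hquot : HasDerivAt (fun x ↦ -(B * sinh x) / sinh (g x))
      (-(B * (cosh ν * sinh (g ν) ^ 2 + B * sinh ν ^ 2 * cosh (g ν))) / sinh (g ν) ^ 3) ν := by
    refine (((hasDerivAt_sinh ν).const_mul B).fun_neg.div (hg' ν (mem_of_mem_nhds hs)).sinh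
      hsinh.ne').congr_deriv ?_
    field_simp
    ring
  rw [hderiv.deriv_eq, hquot.deriv]
  have := cosh_pos ν
  have := cosh_pos (g ν)
  exact div_neg_of_neg_of_pos (neg_neg_of_pos (by positivity)) (by positivity)

theorem eqOn_arcosh_of_cosh_eq {f g : ℝ → ℝ} {s : Set ℝ}
    (hg : ∀ x ∈ s, 0 ≤ g x ∧ cosh (g x) = f x) : EqOn g (arcosh ∘ f) s := fun x hx ↦
  (arcosh_cosh (hg x hx).1).symm.trans (congrArg arcosh (hg x hx).2)

section SubMulCosh

variable {A B ν ν₀ : ℝ} {g : ℝ → ℝ}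

theorem strictAntiOn_sub_mul_cosh (hB : 0 < B) :
    StrictAntiOn (fun ν ↦ A - B * cosh ν) (Ici 0) := fun _ hx _ hy hxy ↦
  sub_lt_sub_left (mul_lt_mul_of_pos_left (cosh_strictMonoOn hx hy hxy) hB) A

theorem sub_mul_cosh_le_sub (hB : 0 ≤ B) : A - B * cosh ν ≤ A - B := by
  nlinarith [one_le_cosh ν]

theorem one_le_sub_mul_cosh (hB : 0 < B) (hν₀ : A - B * cosh ν₀ = 1) (hν : ν ∈ Icc 0 ν₀) :
    1 ≤ A - B * cosh ν :=
  hν₀ ▸ (strictAntiOn_sub_mul_cosh hB).antitoneOn hν.1 (hν.1.trans hν.2) hν.2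

theorem one_lt_sub_mul_cosh (hB : 0 < B) (hν₀ : A - B * cosh ν₀ = 1) (hν : ν ∈ Ico 0 ν₀) :
    1 < A - B * cosh ν :=
  hν₀ ▸ strictAntiOn_sub_mul_cosh hB hν.1 (hν.1.trans hν.2.le) hν.2

theorem strictAntiOn_of_cosh_eq_sub_mul_cosh (hB : 0 < B)
    (hν₀ : A - B * cosh ν₀ = 1) (hg : ∀ ν ∈ Icc 0 ν₀, 0 ≤ g ν ∧ cosh (g ν) = A - B * cosh ν) :
    StrictAntiOn g (Icc 0 ν₀) :=
  (strictMonoOn_arcosh.comp_strictAntiOn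
    ((strictAntiOn_sub_mul_cosh hB).mono Icc_subset_Ici_self) fun _ hν ↦
      zero_lt_one.trans_le (one_le_sub_mul_cosh hB hν₀ hν)).congr
    (eqOn_arcosh_of_cosh_eq hg).symm

theorem hasDerivAt_of_cosh_eq_sub_mul_cosh (hB : 0 < B)
    (hν₀ : A - B * cosh ν₀ = 1) (hg : ∀ ν ∈ Icc 0 ν₀, 0 ≤ g ν ∧ cosh (g ν) = A - B * cosh ν)
    (hν : ν ∈ Ioo 0 ν₀) : HasDerivAt g (-(B * sinh ν) / sinh (g ν)) ν :=
  hasDerivAt_of_cosh_eq (eventually_of_mem (Ioo_mem_nhds hν.1 hν.2)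
      fun x hx ↦ hg x (Ioo_subset_Icc_self hx))
    (((hasDerivAt_cosh ν).const_mul B).const_sub A)
    (one_lt_sub_mul_cosh hB hν₀ (Ioo_subset_Ico_self hν))

end SubMulCosh

theorem statement1_general
    (K2 K1s : ℝ)
    (hK1s : 0 < K1s)
    (hlow : K1s < K2)
    (A B : ℝ)
    (hA : A = Real.cosh (2 * K1s) * Real.cosh (2 * K2))
    (hB : B = Real.sinh (2 * K1s) * Real.sinh (2 * K2))
    (ν₀ : ℝ) (hν₀pos : 0 < ν₀)
    (hν₀ : Real.cosh ν₀ = (A - 1) / B)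
    (g : ℝ → ℝ)
    (hg : ∀ ν ∈ Set.Icc (0 : ℝ) ν₀,
      0 ≤ g ν ∧ Real.cosh (g ν) = A - B * Real.cosh ν) :
    (∀ ν ∈ Set.Icc (0 : ℝ) ν₀,
      1 ≤ A - B * Real.cosh ν ∧ A - B * Real.cosh ν ≤ A - B) ∧
    g 0 = 2 * (K2 - K1s) ∧
    g ν₀ = 0 ∧
    StrictAntiOn g (Set.Icc 0 ν₀) ∧
    StrictConcaveOn ℝ (Set.Ioo 0 ν₀) g ∧
    (∀ ν ∈ Set.Ioo (0 : ℝ) ν₀,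
      HasDerivAt g (-(B * Real.sinh ν) / Real.sinh (g ν)) ν ∧
      deriv (deriv g) ν < 0) := by
  have hB0 : 0 < B := hB ▸ mul_pos (sinh_pos_iff.2 (by linarith)) (sinh_pos_iff.2 (by linarith))
  have hAB : A - B = cosh (2 * (K2 - K1s)) := by
    rw [hA, hB, mul_sub, cosh_sub]
    ring
  have hν₀' : A - B * cosh ν₀ = 1 := by
    rw [hν₀]
    field_simp
    ring
  have hg_eq := eqOn_arcosh_of_cosh_eq hg
  have hanti := strictAntiOn_of_cosh_eq_sub_mul_cosh hB0 hν₀' hg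
  have hderiv (ν) (hν : ν ∈ Ioo 0 ν₀) := hasDerivAt_of_cosh_eq_sub_mul_cosh hB0 hν₀' hg hν
  have hgν₀ : g ν₀ = 0 := by
    rw [hg_eq (right_mem_Icc.2 hν₀pos.le), Function.comp_apply, hν₀', arcosh_zero]
  have hderiv2 (ν) (hν : ν ∈ Ioo 0 ν₀) : deriv (deriv g) ν < 0 :=
    deriv_deriv_neg_of_hasDerivAt (Ioo_mem_nhds hν.1 hν.2) hB0
      (hgν₀ ▸ hanti (Ioo_subset_Icc_self hν) (right_mem_Icc.2 hν₀pos.le) hν.2) hderiv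
  refine ⟨fun ν hν ↦ ⟨one_le_sub_mul_cosh hB0 hν₀' hν, sub_mul_cosh_le_sub hB0.le⟩, ?_, hgν₀,
    hanti, ?_, fun ν hν ↦ ⟨hderiv ν hν, hderiv2 ν hν⟩⟩
  · rw [hg_eq (left_mem_Icc.2 hν₀pos.le), Function.comp_apply, cosh_zero, mul_one, hAB,
      arcosh_cosh (by linarith)]
  · refine strictConcaveOn_of_deriv2_neg (convex_Ioo 0 ν₀)
      (fun x hx ↦ (hderiv x hx).continuousAt.continuousWithinAt) fun x hx ↦ ?_
    rw [interior_Ioo] at hx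
    simpa using hderiv2 x hx

/-- In the setting of the Onsager function on the imaginary axis:
`ĝ` is well defined on `[0, ν₀]` (i.e. `1 ≤ A − B cosh ν ≤ A − B` there),
`ĝ(0) = 2(K₂ − K₁⋆)`, `ĝ(ν₀) = 0`, `ĝ` is strictly decreasing on `[0, ν₀]`,
and strictly concave on `(0, ν₀)` — its second derivative is strictly negative
there, with `ĝ′(ν) = −B sinh ν / sinh(ĝ ν)` on `(0, ν₀)`. -/
theorem statement1
    (K1 K2 K1s : ℝ)
    (hK1 : 0 < K1) (hK2 : 0 < K2) (hK1s : 0 < K1s)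
    (hdual : Real.exp (2 * K1s) = Real.cosh K1 / Real.sinh K1)
    (hlow : K1s < K2)
    (A B : ℝ)
    (hA : A = Real.cosh (2 * K1s) * Real.cosh (2 * K2))
    (hB : B = Real.sinh (2 * K1s) * Real.sinh (2 * K2))
    (ν₀ : ℝ) (hν₀pos : 0 < ν₀)
    (hν₀ : Real.cosh ν₀ = (A - 1) / B)
    (g : ℝ → ℝ)
    (hg : ∀ ν ∈ Set.Icc (0 : ℝ) ν₀,
      0 ≤ g ν ∧ Real.cosh (g ν) = A - B * Real.cosh ν) :
    (∀ ν ∈ Set.Icc (0 : ℝ) ν₀,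
      1 ≤ A - B * Real.cosh ν ∧ A - B * Real.cosh ν ≤ A - B) ∧
    g 0 = 2 * (K2 - K1s) ∧
    g ν₀ = 0 ∧
    StrictAntiOn g (Set.Icc 0 ν₀) ∧
    StrictConcaveOn ℝ (Set.Ioo 0 ν₀) g ∧
    (∀ ν ∈ Set.Ioo (0 : ℝ) ν₀,
      HasDerivAt g (-(B * Real.sinh ν) / Real.sinh (g ν)) ν ∧
      deriv (deriv g) ν < 0) :=
  statement1_general K2 K1s hK1s hlow A B hA hB ν₀ hν₀pos hν₀ g hg
end

section
/- One has K₁ > K₂⋆, and the endpoint ν₀ of the analyticity interval equals twice the difference of the dual couplings: cosh(2(K₁ − K₂⋆)) = (A − 1)/B, i.e. ν₀ = 2|K₁ − K₂⋆| = 2(K₁ − K₂⋆). -/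
/-!
Kramers–Wannier duality `exp(2K⋆) = coth K` is equivalent to `sinh 2K · sinh 2K⋆ = 1` together with
`cosh 2K⋆ = cosh 2K · sinh 2K⋆`. The first relation makes `K ↦ K⋆` decreasing, so `K₁⋆ < K₂` gives
`K₂⋆ < K₁`. Eliminating the starred couplings through both relations turns the addition formula for
`cosh(2K₁ − 2K₂⋆)` into `(A − 1)/B`, and `cosh` is injective on `[0, ∞)`.
-/

open Real

namespace Real

theorem abs_eq_abs_of_cosh_eq {x y : ℝ} (h : cosh x = cosh y) : |x| = |y| :=
  le_antisymm (cosh_le_cosh.1 h.le) (cosh_le_cosh.1 h.ge)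

section Duality

variable {K Ks : ℝ}

theorem exp_neg_two_mul_of_exp_two_mul_eq_coth (h : exp (2 * Ks) = cosh K / sinh K) :
    exp (-(2 * Ks)) = sinh K / cosh K := by
  rw [exp_neg, h, inv_div]

theorem sinh_two_mul_mul_sinh_two_mul_of_exp_eq_coth (hK : 0 < K)
    (h : exp (2 * Ks) = cosh K / sinh K) : sinh (2 * K) * sinh (2 * Ks) = 1 := by
  have hs : 0 < sinh K := sinh_pos_iff.2 hK
  have hc : 0 < cosh K := cosh_pos K
  rw [sinh_eq (2 * Ks), exp_neg_two_mul_of_exp_two_mul_eq_coth h, h, sinh_two_mul]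
  field_simp
  linear_combination cosh_sq_sub_sinh_sq K

theorem cosh_two_mul_of_exp_eq_coth (hK : 0 < K)
    (h : exp (2 * Ks) = cosh K / sinh K) : cosh (2 * Ks) = cosh (2 * K) * sinh (2 * Ks) := by
  have hs : 0 < sinh K := sinh_pos_iff.2 hK
  have hc : 0 < cosh K := cosh_pos K
  rw [cosh_eq (2 * Ks), sinh_eq (2 * Ks), exp_neg_two_mul_of_exp_two_mul_eq_coth h, h,
    cosh_two_mul]
  field_simp
  linear_combination -cosh_sq_sub_sinh_sq K

end Duality

theorem lt_of_sinh_mul_sinh_eq_one {x x' y y' : ℝ} (hx : 0 < x) (hy : 0 < y)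
    (hxx' : sinh x * sinh x' = 1) (hyy' : sinh y * sinh y' = 1) (h : x' < y) : y' < x := by
  have hsx : 0 < sinh x := sinh_pos_iff.2 hx
  have hsy : 0 < sinh y := sinh_pos_iff.2 hy
  have hlt : sinh x' < sinh y := sinh_lt_sinh.2 h
  have hprod : 1 < sinh x * sinh y := by nlinarith
  exact sinh_lt_sinh.1 (by nlinarith)

theorem cosh_sub_eq_of_dual {x x' y y' : ℝ}
    (hxx' : sinh x * sinh x' = 1) (hcx' : cosh x' = cosh x * sinh x')
    (hyy' : sinh y * sinh y' = 1) (hcy' : cosh y' = cosh y * sinh y') :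
    cosh (x - y') = (cosh x' * cosh y - 1) / (sinh x' * sinh y) := by
  have hsx : sinh x ≠ 0 := left_ne_zero_of_mul_eq_one hxx'
  have hsy : sinh y ≠ 0 := left_ne_zero_of_mul_eq_one hyy'
  have hsx' : sinh x' = 1 / sinh x := by field_simp; linarith
  have hsy' : sinh y' = 1 / sinh y := by field_simp; linarith
  rw [cosh_sub, hcy', hcx', hsx', hsy']
  field_simp

end Real

theorem statement2_general
    (K1 K2 K1s K2s : ℝ)
    (hK1 : 0 < K1) (hK2 : 0 < K2)
    (hdual1 : Real.exp (2 * K1s) = Real.cosh K1 / Real.sinh K1)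
    (hdual2 : Real.exp (2 * K2s) = Real.cosh K2 / Real.sinh K2)
    (hlow : K1s < K2)
    (A B : ℝ)
    (hA : A = Real.cosh (2 * K1s) * Real.cosh (2 * K2))
    (hB : B = Real.sinh (2 * K1s) * Real.sinh (2 * K2))
    (ν₀ : ℝ) (hν₀pos : 0 < ν₀)
    (hν₀ : Real.cosh ν₀ = (A - 1) / B) :
    K2s < K1 ∧
    Real.cosh (2 * (K1 - K2s)) = (A - 1) / B ∧
    ν₀ = 2 * |K1 - K2s| ∧
    ν₀ = 2 * (K1 - K2s) := by
  have hs1 := sinh_two_mul_mul_sinh_two_mul_of_exp_eq_coth hK1 hdual1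
  have hs2 := sinh_two_mul_mul_sinh_two_mul_of_exp_eq_coth hK2 hdual2
  have hlt : K2s < K1 := by
    have := lt_of_sinh_mul_sinh_eq_one (by positivity) (by positivity) hs1 hs2 (by linarith)
    linarith
  have hcosh : cosh (2 * (K1 - K2s)) = (A - 1) / B := by
    rw [hA, hB, mul_sub]
    exact cosh_sub_eq_of_dual hs1 (cosh_two_mul_of_exp_eq_coth hK1 hdual1)
      hs2 (cosh_two_mul_of_exp_eq_coth hK2 hdual2)
  have habs : ν₀ = 2 * |K1 - K2s| := by
    rw [← abs_of_pos hν₀pos, abs_eq_abs_of_cosh_eq (hν₀.trans hcosh.symm), abs_mul, abs_two]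
  refine ⟨hlt, hcosh, habs, ?_⟩
  rwa [abs_of_pos (sub_pos.2 hlt)] at habs

/-- With dual couplings `exp(2K₁⋆) = coth K₁`,
`exp(2K₂⋆) = coth K₂` and `K₂ > K₁⋆`, one has `K₁ > K₂⋆`, and the endpoint
`ν₀` of the analyticity interval (defined by `cosh ν₀ = (A−1)/B`, `ν₀ > 0`)
equals twice the difference of the dual couplings:
`cosh(2(K₁ − K₂⋆)) = (A−1)/B`, i.e. `ν₀ = 2|K₁ − K₂⋆| = 2(K₁ − K₂⋆)`. -/
theorem statement2
    (K1 K2 K1s K2s : ℝ)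
    (hK1 : 0 < K1) (hK2 : 0 < K2) (hK1s : 0 < K1s) (hK2s : 0 < K2s)
    (hdual1 : Real.exp (2 * K1s) = Real.cosh K1 / Real.sinh K1)
    (hdual2 : Real.exp (2 * K2s) = Real.cosh K2 / Real.sinh K2)
    (hlow : K1s < K2)
    (A B : ℝ)
    (hA : A = Real.cosh (2 * K1s) * Real.cosh (2 * K2))
    (hB : B = Real.sinh (2 * K1s) * Real.sinh (2 * K2))
    (ν₀ : ℝ) (hν₀pos : 0 < ν₀)
    (hν₀ : Real.cosh ν₀ = (A - 1) / B) :
    K2s < K1 ∧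
    Real.cosh (2 * (K1 - K2s)) = (A - 1) / B ∧
    ν₀ = 2 * |K1 - K2s| ∧
    ν₀ = 2 * (K1 - K2s) :=
  statement2_general K1 K2 K1s K2s hK1 hK2 hdual1 hdual2 hlow A B hA hB ν₀ hν₀pos hν₀
end

section
/- The map ν ↦ B·sinh(ν)/sinh(ĝ(ν)) is a continuous strictly increasing bijection from [0,ν₀) onto [0,∞). Consequently, for every θ ∈ [0,π/2) the saddle-point equation B·sinh(ν) = tan(θ)·sinh(ĝ(ν)) has a unique solution ν(θ) ∈ [0,ν₀), with ν(0) = 0 and ν(θ) → ν₀ as θ → π/2⁻. -/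
/-!
On `[0, ν₀]` the relation `cosh ĝ(ν) = A - B cosh ν` with `ĝ ≥ 0` gives
`sinh ĝ(ν) = √((A - B cosh ν)² - 1)`. Since `B > 0` and `A - B cosh ν₀ = 1`, this is continuous,
decreasing, positive on `[0, ν₀)` and zero at `ν₀`, so `B sinh ν / sinh ĝ(ν)` is continuous,
strictly increasing, vanishes at `0` and blows up at `ν₀⁻`; by the intermediate value theorem it
maps `[0, ν₀)` onto `[0, ∞)`. The saddle-point equation says that this ratio equals `tan θ`,
which tends to `∞` as `θ → π/2⁻`, forcing `ν(θ) → ν₀`.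
-/

open Real Filter Set Topology

theorem Real.sinh_eq_sqrt_cosh_sq_sub_one {x : ℝ} (hx : 0 ≤ x) : sinh x = √(cosh x ^ 2 - 1) := by
  rw [← sinh_arcosh (one_le_cosh x), arcosh_cosh hx]

theorem StrictMonoOn.div_of_antitoneOn {α 𝕜 : Type*} [Preorder α] [Field 𝕜] [LinearOrder 𝕜]
    [IsStrictOrderedRing 𝕜] {s : Set α} {f g : α → 𝕜} (hf : StrictMonoOn f s)
    (hf₀ : ∀ x ∈ s, 0 ≤ f x) (hg : AntitoneOn g s) (hg₀ : ∀ x ∈ s, 0 < g x) :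
    StrictMonoOn (fun x => f x / g x) s := fun x hx y hy hxy =>
  calc f x / g x ≤ f x / g y := div_le_div_of_nonneg_left (hf₀ x hx) (hg₀ y hy) (hg hx hy hxy.le)
    _ < f y / g y := div_lt_div_of_pos_right (hf hx hy hxy) (hg₀ y hy)

section Order

variable {α β : Type*} [ConditionallyCompleteLinearOrder α] [TopologicalSpace α] [OrderTopology α]
  [LinearOrder β]

theorem ContinuousOn.image_Ico_eq_Ici_of_tendsto_atTop [DenselyOrdered α] [TopologicalSpace β]
    [OrderClosedTopology β] {a b : α} {f : α → β}
    (hab : a < b) (hf : ContinuousOn f (Ico a b)) (hmono : MonotoneOn f (Ico a b))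
    (htop : Tendsto f (𝓝[<] b) atTop) : f '' Ico a b = Ici (f a) := by
  have ha : a ∈ Ico a b := left_mem_Ico.2 hab
  have : (𝓝[<] b).NeBot := nhdsLT_neBot_of_exists_lt ⟨a, hab⟩
  refine (image_subset_iff.2 fun x hx => hmono ha hx hx.1).antisymm fun y hy => ?_
  obtain ⟨c, hyc, hc⟩ := ((htop.eventually_ge_atTop y).and (Ico_mem_nhdsLT hab)).exists
  exact hf.surjOn_Icc ha hc ⟨hy, hyc⟩

theorem MonotoneOn.tendsto_nhds_of_tendsto_comp_atTop [NoMaxOrder β] {ι : Type*} {l : Filter ι}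
    {f : α → β} {u : ι → α} {a b : α} (hf : MonotoneOn f (Ico a b))
    (hu : ∀ᶠ i in l, u i ∈ Ico a b) (hfu : Tendsto (f ∘ u) l atTop) : Tendsto u l (𝓝 b) := by
  refine tendsto_order.2 ⟨fun c hcb => ?_, fun c hbc => hu.mono fun i hi => hi.2.trans hbc⟩
  rcases lt_or_ge c a with hca | hac
  · exact hu.mono fun i hi => hca.trans_le hi.1
  filter_upwards [hu, hfu.eventually_gt_atTop (f c)] with i hi hfi
  by_contra! hic
  exact (hf hi ⟨hac, hcb⟩ hic).not_gt hfi

end Order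

section SaddlePoint

variable {A B ν₀ : ℝ} {g : ℝ → ℝ}

theorem sinh_comp_eq_sqrt (hg : ∀ ν ∈ Icc 0 ν₀, 0 ≤ g ν ∧ cosh (g ν) = A - B * cosh ν)
    {ν : ℝ} (hν : ν ∈ Icc 0 ν₀) : sinh (g ν) = √((A - B * cosh ν) ^ 2 - 1) := by
  rw [sinh_eq_sqrt_cosh_sq_sub_one (hg ν hν).1, (hg ν hν).2]

theorem sinh_comp_pos (hB : 0 < B) (hν₀ : A - B * cosh ν₀ = 1)
    (hg : ∀ ν ∈ Icc 0 ν₀, 0 ≤ g ν ∧ cosh (g ν) = A - B * cosh ν)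
    {ν : ℝ} (hν : ν ∈ Ico 0 ν₀) : 0 < sinh (g ν) := by
  have hcosh : cosh ν < cosh ν₀ := cosh_strictMonoOn hν.1 (hν.1.trans hν.2.le) hν.2
  have hgt : 1 < A - B * cosh ν := by nlinarith
  rw [sinh_comp_eq_sqrt hg (Ico_subset_Icc_self hν)]
  exact sqrt_pos.2 (by nlinarith)

theorem antitoneOn_sinh_comp (hB : 0 ≤ B)
    (hg : ∀ ν ∈ Icc 0 ν₀, 0 ≤ g ν ∧ cosh (g ν) = A - B * cosh ν) :
    AntitoneOn (fun ν => sinh (g ν)) (Icc 0 ν₀) := by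
  intro x hx y hy hxy
  have hcosh : cosh x ≤ cosh y := cosh_strictMonoOn.monotoneOn hx.1 hy.1 hxy
  have hy₁ : 1 ≤ A - B * cosh y := (hg y hy).2 ▸ one_le_cosh _
  simp only [sinh_comp_eq_sqrt hg hx, sinh_comp_eq_sqrt hg hy]
  gcongr

theorem continuousOn_sinh_comp (hg : ∀ ν ∈ Icc 0 ν₀, 0 ≤ g ν ∧ cosh (g ν) = A - B * cosh ν) :
    ContinuousOn (fun ν => sinh (g ν)) (Icc 0 ν₀) :=
  (by fun_prop : Continuous fun ν => √((A - B * cosh ν) ^ 2 - 1)).continuousOn.congr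
    fun _ hν => sinh_comp_eq_sqrt hg hν

theorem tendsto_sinh_comp_nhdsGT_zero (hB : 0 < B) (hν₀pos : 0 < ν₀) (hν₀ : A - B * cosh ν₀ = 1)
    (hg : ∀ ν ∈ Icc 0 ν₀, 0 ≤ g ν ∧ cosh (g ν) = A - B * cosh ν) :
    Tendsto (fun ν => sinh (g ν)) (𝓝[<] ν₀) (𝓝[>] 0) := by
  have hzero : sinh (g ν₀) = 0 := by
    rw [sinh_comp_eq_sqrt hg (right_mem_Icc.2 hν₀pos.le), hν₀]
    norm_num
  refine tendsto_nhdsWithin_iff.2 ⟨?_, ?_⟩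
  · have := (continuousOn_sinh_comp hg ν₀ (right_mem_Icc.2 hν₀pos.le)).mono_of_mem_nhdsWithin
      (Icc_mem_nhdsLT hν₀pos)
    rwa [ContinuousWithinAt, hzero] at this
  · filter_upwards [Ico_mem_nhdsLT hν₀pos] with ν hν using sinh_comp_pos hB hν₀ hg hν

theorem continuousOn_mul_sinh_div_sinh_comp (hB : 0 < B) (hν₀ : A - B * cosh ν₀ = 1)
    (hg : ∀ ν ∈ Icc 0 ν₀, 0 ≤ g ν ∧ cosh (g ν) = A - B * cosh ν) :
    ContinuousOn (fun ν => B * sinh ν / sinh (g ν)) (Ico 0 ν₀) :=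
  (by fun_prop : Continuous fun ν => B * sinh ν).continuousOn.div
    ((continuousOn_sinh_comp hg).mono Ico_subset_Icc_self)
    fun _ hν => (sinh_comp_pos hB hν₀ hg hν).ne'

theorem strictMonoOn_mul_sinh_div_sinh_comp (hB : 0 < B) (hν₀ : A - B * cosh ν₀ = 1)
    (hg : ∀ ν ∈ Icc 0 ν₀, 0 ≤ g ν ∧ cosh (g ν) = A - B * cosh ν) :
    StrictMonoOn (fun ν => B * sinh ν / sinh (g ν)) (Ico 0 ν₀) :=
  ((sinh_strictMono.const_mul hB).strictMonoOn _).div_of_antitoneOn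
    (fun _ hν => mul_nonneg hB.le (sinh_nonneg_iff.2 hν.1))
    ((antitoneOn_sinh_comp hB.le hg).mono Ico_subset_Icc_self)
    fun _ hν => sinh_comp_pos hB hν₀ hg hν

theorem tendsto_mul_sinh_div_sinh_comp_atTop (hB : 0 < B) (hν₀pos : 0 < ν₀)
    (hν₀ : A - B * cosh ν₀ = 1)
    (hg : ∀ ν ∈ Icc 0 ν₀, 0 ≤ g ν ∧ cosh (g ν) = A - B * cosh ν) :
    Tendsto (fun ν => B * sinh ν / sinh (g ν)) (𝓝[<] ν₀) atTop := by
  simp only [div_eq_mul_inv]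
  exact Tendsto.pos_mul_atTop (mul_pos hB (sinh_pos_iff.2 hν₀pos))
    ((by fun_prop : Continuous fun ν => B * sinh ν).continuousWithinAt.tendsto)
    (tendsto_inv_nhdsGT_zero.comp (tendsto_sinh_comp_nhdsGT_zero hB hν₀pos hν₀ hg))

end SaddlePoint

theorem statement3_general
    (K2 K1s : ℝ)
    (hK2 : 0 < K2) (hK1s : 0 < K1s)
    (A B : ℝ)
    (hB : B = Real.sinh (2 * K1s) * Real.sinh (2 * K2))
    (ν₀ : ℝ) (hν₀pos : 0 < ν₀)
    (hν₀ : Real.cosh ν₀ = (A - 1) / B)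
    (g : ℝ → ℝ)
    (hg : ∀ ν ∈ Set.Icc (0 : ℝ) ν₀,
      0 ≤ g ν ∧ Real.cosh (g ν) = A - B * Real.cosh ν)
    (nu : ℝ → ℝ)
    (hnu : ∀ θ ∈ Set.Ico (0 : ℝ) (π / 2),
      nu θ ∈ Set.Ico (0 : ℝ) ν₀ ∧
      B * Real.sinh (nu θ) = Real.tan θ * Real.sinh (g (nu θ))) :
    ContinuousOn (fun ν => B * Real.sinh ν / Real.sinh (g ν)) (Set.Ico 0 ν₀) ∧
    StrictMonoOn (fun ν => B * Real.sinh ν / Real.sinh (g ν)) (Set.Ico 0 ν₀) ∧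
    (fun ν => B * Real.sinh ν / Real.sinh (g ν)) '' Set.Ico 0 ν₀ = Set.Ici 0 ∧
    (∀ θ ∈ Set.Ico (0 : ℝ) (π / 2),
      ∃! ν : ℝ, ν ∈ Set.Ico (0 : ℝ) ν₀ ∧
        B * Real.sinh ν = Real.tan θ * Real.sinh (g ν)) ∧
    nu 0 = 0 ∧
    Tendsto nu (nhdsWithin (π / 2) (Set.Iio (π / 2))) (nhds ν₀) := by
  have hBpos : 0 < B := hB ▸ mul_pos (sinh_pos_iff.2 (by positivity)) (sinh_pos_iff.2 (by positivity))
  have hν₀' : A - B * cosh ν₀ = 1 := by rw [hν₀]; field_simp; ring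
  have hcont := continuousOn_mul_sinh_div_sinh_comp hBpos hν₀' hg
  have hmono := strictMonoOn_mul_sinh_div_sinh_comp hBpos hν₀' hg
  have himage : (fun ν => B * sinh ν / sinh (g ν)) '' Ico 0 ν₀ = Ici 0 := by
    simpa using hcont.image_Ico_eq_Ici_of_tendsto_atTop hν₀pos hmono.monotoneOn
      (tendsto_mul_sinh_div_sinh_comp_atTop hBpos hν₀pos hν₀' hg)
  have hsaddle : ∀ t, ∀ ν ∈ Ico 0 ν₀, B * sinh ν = t * sinh (g ν) ↔ B * sinh ν / sinh (g ν) = t :=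
    fun t ν hν => (div_eq_iff (sinh_comp_pos hBpos hν₀' hg hν).ne').symm
  have hnu' : ∀ θ ∈ Ico 0 (π / 2), B * sinh (nu θ) / sinh (g (nu θ)) = tan θ :=
    fun θ hθ => (hsaddle _ _ (hnu θ hθ).1).1 (hnu θ hθ).2
  have hπ : Ico 0 (π / 2) ∈ 𝓝[<] (π / 2) := Ico_mem_nhdsLT (by positivity)
  refine ⟨hcont, hmono, himage, fun θ hθ => ?_, ?_, ?_⟩
  · obtain ⟨ν, hν, hνθ⟩ := himage.ge (tan_nonneg_of_nonneg_of_le_pi_div_two hθ.1 hθ.2.le)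
    refine ⟨ν, ⟨hν, (hsaddle _ ν hν).2 hνθ⟩, fun μ ⟨hμ, hμθ⟩ => ?_⟩
    exact hmono.injOn hμ hν (((hsaddle _ μ hμ).1 hμθ).trans hνθ.symm)
  · have h0 : (0 : ℝ) ∈ Ico 0 (π / 2) := ⟨le_rfl, by positivity⟩
    exact hmono.injOn (hnu 0 h0).1 ⟨le_rfl, hν₀pos⟩ (by simpa using hnu' 0 h0)
  · refine hmono.monotoneOn.tendsto_nhds_of_tendsto_comp_atTop
      (Filter.mem_of_superset hπ fun θ hθ => (hnu θ hθ).1) (tendsto_tan_pi_div_two.congr' ?_)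
    filter_upwards [hπ] with θ hθ using (hnu' θ hθ).symm

/-- The map `ν ↦ B sinh ν / sinh (ĝ ν)` is a continuous strictly
increasing bijection from `[0, ν₀)` onto `[0, ∞)`.  Consequently, for every
`θ ∈ [0, π/2)` the saddle-point equation `B sinh ν = tan θ · sinh (ĝ ν)` has a
unique solution `ν(θ) ∈ [0, ν₀)`, with `ν(0) = 0` and `ν(θ) → ν₀` as
`θ → π/2⁻`. -/
theorem statement3
    (K1 K2 K1s : ℝ)
    (hK1 : 0 < K1) (hK2 : 0 < K2) (hK1s : 0 < K1s)
    (hdual : Real.exp (2 * K1s) = Real.cosh K1 / Real.sinh K1)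
    (hlow : K1s < K2)
    (A B : ℝ)
    (hA : A = Real.cosh (2 * K1s) * Real.cosh (2 * K2))
    (hB : B = Real.sinh (2 * K1s) * Real.sinh (2 * K2))
    (ν₀ : ℝ) (hν₀pos : 0 < ν₀)
    (hν₀ : Real.cosh ν₀ = (A - 1) / B)
    (g : ℝ → ℝ)
    (hg : ∀ ν ∈ Set.Icc (0 : ℝ) ν₀,
      0 ≤ g ν ∧ Real.cosh (g ν) = A - B * Real.cosh ν)
    (nu : ℝ → ℝ)
    (hnu : ∀ θ ∈ Set.Ico (0 : ℝ) (π / 2),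
      nu θ ∈ Set.Ico (0 : ℝ) ν₀ ∧
      B * Real.sinh (nu θ) = Real.tan θ * Real.sinh (g (nu θ))) :
    ContinuousOn (fun ν => B * Real.sinh ν / Real.sinh (g ν)) (Set.Ico 0 ν₀) ∧
    StrictMonoOn (fun ν => B * Real.sinh ν / Real.sinh (g ν)) (Set.Ico 0 ν₀) ∧
    (fun ν => B * Real.sinh ν / Real.sinh (g ν)) '' Set.Ico 0 ν₀ = Set.Ici 0 ∧
    (∀ θ ∈ Set.Ico (0 : ℝ) (π / 2),
      ∃! ν : ℝ, ν ∈ Set.Ico (0 : ℝ) ν₀ ∧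
        B * Real.sinh ν = Real.tan θ * Real.sinh (g ν)) ∧
    nu 0 = 0 ∧
    Tendsto nu (nhdsWithin (π / 2) (Set.Iio (π / 2))) (nhds ν₀) :=
  statement3_general K2 K1s hK2 hK1s A B hB ν₀ hν₀pos hν₀ g hg nu hnu
end

section
/- The angle-dependent surface tension τ(θ) = cosθ·ĝ(ν(θ)) + sinθ·ν(θ) is differentiable on (0,π/2) with τ′(θ) = −sinθ·ĝ(ν(θ)) + cosθ·ν(θ). -/
open Real Set Filter Topology

/-!
On `[0, ν₀]` the function `ĝ` is `arcosh (A - B cosh ν)`, whose derivative is `-Φ ν` with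
`Φ ν = B sinh ν / sinh ĝ(ν)`, so the saddle-point equation reads `Φ (ν θ) = tan θ`. Since `Φ` has
positive derivative on `(-ν₀, ν₀)`, the inverse function theorem makes `ν = Φ⁻¹ ∘ tan` differentiable.
Differentiating `τ` then produces the term `ν'(θ) (cos θ · ĝ'(ν) + sin θ)`, which vanishes because
`ĝ'(ν(θ)) = -tan θ` (the envelope theorem: `ν(θ)` is a critical point of
`ν ↦ cos θ · ĝ(ν) + sin θ · ν`).
-/

theorem HasStrictDerivAt.hasDerivAt_of_comp_eq {𝕜 : Type*} [NontriviallyNormedField 𝕜]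
    [CompleteSpace 𝕜] {Φ h u : 𝕜 → 𝕜} {s : Set 𝕜} {a Φ' h' : 𝕜}
    (hΦ : HasStrictDerivAt Φ Φ' (u a)) (hΦ' : Φ' ≠ 0) (hinj : InjOn Φ s) (hs : s ∈ 𝓝 (u a))
    (hh : HasDerivAt h h' a) (hu : ∀ᶠ t in 𝓝 a, u t ∈ s ∧ Φ (u t) = h t) :
    HasDerivAt u (Φ'⁻¹ * h') a := by
  set Ψ := hΦ.localInverse Φ Φ' (u a) hΦ'
  have hua : Φ (u a) = h a := hu.self_of_nhds.2
  have hΨ : HasDerivAt Ψ Φ'⁻¹ (h a) := hua ▸ (hΦ.to_localInverse hΦ').hasDerivAt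
  have hΨu : Ψ (h a) = u a := hua ▸ (hΦ.eventually_left_inverse hΦ').self_of_nhds
  have hΨh : Tendsto (fun t => Ψ (h t)) (𝓝 a) (𝓝 (u a)) :=
    hΨu ▸ (hΨ.continuousAt.comp hh.continuousAt).tendsto
  have hright : ∀ᶠ t in 𝓝 a, Φ (Ψ (h t)) = h t :=
    hh.continuousAt.tendsto.eventually (hua ▸ hΦ.eventually_right_inverse hΦ')
  refine (hΨ.comp a hh).congr_of_eventuallyEq ?_
  filter_upwards [hu, hΨh.eventually_mem hs, hright] with t ⟨hus, hut⟩ hΨs hΦΨ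
  exact hinj hus hΨs (hut.trans hΦΨ.symm)

theorem hasDerivAt_cos_mul_comp_add_sin_mul {G ν : ℝ → ℝ} {θ ν' : ℝ} (hcos : cos θ ≠ 0)
    (hν : HasDerivAt ν ν' θ) (hG : HasDerivAt G (-tan θ) (ν θ)) :
    HasDerivAt (fun t => cos t * G (ν t) + sin t * ν t)
      (-sin θ * G (ν θ) + cos θ * ν θ) θ := by
  refine (((hasDerivAt_cos θ).mul (hG.comp θ hν)).add ((hasDerivAt_sin θ).mul hν)).congr_deriv ?_
  rw [Function.comp_apply, tan_eq_sin_div_cos]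
  field_simp
  ring

noncomputable section

namespace SurfaceTension

/-- The function `ĝ`, defined wherever `A - B cosh ν ≥ 1`. -/
def dispersion (A B ν : ℝ) : ℝ := arcosh (A - B * cosh ν)

/-- `Φ = -ĝ'`; the saddle-point equation is `Φ (ν θ) = tan θ`. -/
def saddleSlope (A B ν : ℝ) : ℝ := B * sinh ν / sinh (dispersion A B ν)

variable {A B ν : ℝ}

theorem one_lt_sub_mul_cosh {ν₀ : ℝ} (hB : 0 < B) (hν₀ : B * cosh ν₀ = A - 1)
    (hν : ν ∈ Ioo (-ν₀) ν₀) : 1 < A - B * cosh ν := by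
  have : cosh ν < cosh ν₀ := by
    rw [cosh_lt_cosh]
    exact (abs_lt.2 hν).trans_le (le_abs_self ν₀)
  nlinarith

theorem sinh_dispersion_pos (hc : 1 < A - B * cosh ν) : 0 < sinh (dispersion A B ν) :=
  sinh_pos_iff.2 (arcosh_pos hc)

theorem saddleSlope_eq_iff (hc : 1 < A - B * cosh ν) {m : ℝ} :
    saddleSlope A B ν = m ↔ B * sinh ν = m * sinh (dispersion A B ν) :=
  div_eq_iff (sinh_dispersion_pos hc).ne'

theorem hasStrictDerivAt_dispersion (hc : 1 < A - B * cosh ν) :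
    HasStrictDerivAt (dispersion A B) (-saddleSlope A B ν) ν := by
  have hinner : HasStrictDerivAt (fun x => A - B * cosh x) (-(B * sinh ν)) ν :=
    ((hasStrictDerivAt_cosh ν).const_mul B).const_sub A
  refine ((hasStrictDerivAt_arcosh hc).comp ν hinner).congr_deriv ?_
  rw [saddleSlope, dispersion, sinh_arcosh hc.le]
  ring

theorem hasStrictDerivAt_saddleSlope (hB : 0 < B) (hc : 1 < A - B * cosh ν) :
    ∃ d, 0 < d ∧ HasStrictDerivAt (saddleSlope A B) d ν := by
  set S := sinh (dispersion A B ν) with hSdef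
  have hS : 0 < S := sinh_dispersion_pos hc
  have hSd : HasStrictDerivAt (fun x => sinh (dispersion A B x))
      ((A - B * cosh ν) * -saddleSlope A B ν) ν := by
    have := (hasStrictDerivAt_sinh _).comp ν (hasStrictDerivAt_dispersion hc)
    rwa [dispersion, cosh_arcosh hc.le] at this
  refine ⟨(B * cosh ν * S + (A - B * cosh ν) * (B * sinh ν) ^ 2 / S) / S ^ 2, ?_,
    (((hasStrictDerivAt_sinh ν).const_mul B).div hSd hS.ne').congr_deriv ?_⟩
  · have hpos : 0 < B * cosh ν * S := by positivity
    have hnn : 0 ≤ (A - B * cosh ν) * (B * sinh ν) ^ 2 / S := by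
      have : 0 ≤ A - B * cosh ν := by linarith
      positivity
    positivity
  · rw [saddleSlope, ← hSdef]
    field_simp
    ring

theorem strictMonoOn_saddleSlope {ν₀ : ℝ} (hB : 0 < B) (hν₀ : B * cosh ν₀ = A - 1) :
    StrictMonoOn (saddleSlope A B) (Ioo (-ν₀) ν₀) := by
  have hderiv (x) (hx : x ∈ Ioo (-ν₀) ν₀) :=
    hasStrictDerivAt_saddleSlope hB (one_lt_sub_mul_cosh hB hν₀ hx)
  refine strictMonoOn_of_deriv_pos (convex_Ioo _ _) (fun x hx => ?_) (fun x hx => ?_)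
  · obtain ⟨_, _, hd⟩ := hderiv x hx
    exact hd.hasDerivAt.continuousAt.continuousWithinAt
  · rw [interior_Ioo] at hx
    obtain ⟨_, hpos, hd⟩ := hderiv x hx
    rwa [hd.hasDerivAt.deriv]

end SurfaceTension

end

open SurfaceTension in
theorem statement5_general
    (K2 K1s : ℝ)
    (hK2 : 0 < K2) (hK1s : 0 < K1s)
    (A B : ℝ)
    (hB : B = Real.sinh (2 * K1s) * Real.sinh (2 * K2))
    (ν₀ : ℝ)
    (hν₀ : Real.cosh ν₀ = (A - 1) / B)
    (g : ℝ → ℝ)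
    (hg : ∀ ν ∈ Set.Icc (0 : ℝ) ν₀,
      0 ≤ g ν ∧ Real.cosh (g ν) = A - B * Real.cosh ν)
    (nu : ℝ → ℝ)
    (hnu : ∀ θ ∈ Set.Ico (0 : ℝ) (π / 2),
      nu θ ∈ Set.Ico (0 : ℝ) ν₀ ∧
      B * Real.sinh (nu θ) = Real.tan θ * Real.sinh (g (nu θ)))
    (tau : ℝ → ℝ)
    (htau : ∀ θ, tau θ = Real.cos θ * g (nu θ) + Real.sin θ * nu θ) :
    ∀ θ ∈ Set.Ioo (0 : ℝ) (π / 2),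
      HasDerivAt tau (-Real.sin θ * g (nu θ) + Real.cos θ * nu θ) θ := by
  intro θ hθ
  have hB0 : 0 < B := hB ▸ by positivity
  have hBν₀ : B * cosh ν₀ = A - 1 := by rw [hν₀]; field_simp
  have hsolve : ∀ t ∈ Ico 0 (π / 2), nu t ∈ Ioo (-ν₀) ν₀ ∧
      g (nu t) = dispersion A B (nu t) ∧ saddleSlope A B (nu t) = tan t := by
    intro t ht
    obtain ⟨⟨h0, hlt⟩, hsaddle⟩ := hnu t ht
    have hν : nu t ∈ Ioo (-ν₀) ν₀ := ⟨by linarith, hlt⟩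
    obtain ⟨hg0, hgc⟩ := hg (nu t) ⟨h0, hlt.le⟩
    have hgd : g (nu t) = dispersion A B (nu t) := by rw [dispersion, ← hgc, arcosh_cosh hg0]
    exact ⟨hν, hgd, (saddleSlope_eq_iff (one_lt_sub_mul_cosh hB0 hBν₀ hν)).2 (hgd ▸ hsaddle)⟩
  have hnear : ∀ᶠ t in 𝓝 θ, t ∈ Ico 0 (π / 2) := Ico_mem_nhds hθ.1 hθ.2
  obtain ⟨hν, hgν, hslope⟩ := hsolve θ (Ioo_subset_Ico_self hθ)
  have hc := one_lt_sub_mul_cosh hB0 hBν₀ hν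
  have hcos : cos θ ≠ 0 := (cos_pos_of_mem_Ioo ⟨by linarith [pi_pos, hθ.1], hθ.2⟩).ne'
  obtain ⟨d, hd, hΦ⟩ := hasStrictDerivAt_saddleSlope hB0 hc
  have hnuD : HasDerivAt nu (d⁻¹ * (1 / cos θ ^ 2)) θ :=
    hΦ.hasDerivAt_of_comp_eq hd.ne' (strictMonoOn_saddleSlope hB0 hBν₀).injOn
      (Ioo_mem_nhds hν.1 hν.2) (hasDerivAt_tan hcos)
      (hnear.mono fun t ht => ⟨(hsolve t ht).1, (hsolve t ht).2.2⟩)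
  rw [hgν]
  refine (hasDerivAt_cos_mul_comp_add_sin_mul hcos hnuD
    (hslope ▸ (hasStrictDerivAt_dispersion hc).hasDerivAt)).congr_of_eventuallyEq ?_
  filter_upwards [hnear] with t ht
  rw [htau, (hsolve t ht).2.1]

/-- The angle-dependent surface tension
`τ(θ) = cos θ · ĝ(ν(θ)) + sin θ · ν(θ)` is differentiable on `(0, π/2)` with
`τ′(θ) = −sin θ · ĝ(ν(θ)) + cos θ · ν(θ)`. -/
theorem statement5
    (K1 K2 K1s : ℝ)
    (hK1 : 0 < K1) (hK2 : 0 < K2) (hK1s : 0 < K1s)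
    (hdual : Real.exp (2 * K1s) = Real.cosh K1 / Real.sinh K1)
    (hlow : K1s < K2)
    (A B : ℝ)
    (hA : A = Real.cosh (2 * K1s) * Real.cosh (2 * K2))
    (hB : B = Real.sinh (2 * K1s) * Real.sinh (2 * K2))
    (ν₀ : ℝ) (hν₀pos : 0 < ν₀)
    (hν₀ : Real.cosh ν₀ = (A - 1) / B)
    (g : ℝ → ℝ)
    (hg : ∀ ν ∈ Set.Icc (0 : ℝ) ν₀,
      0 ≤ g ν ∧ Real.cosh (g ν) = A - B * Real.cosh ν)
    (nu : ℝ → ℝ)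
    (hnu : ∀ θ ∈ Set.Ico (0 : ℝ) (π / 2),
      nu θ ∈ Set.Ico (0 : ℝ) ν₀ ∧
      B * Real.sinh (nu θ) = Real.tan θ * Real.sinh (g (nu θ)))
    (tau : ℝ → ℝ)
    (htau : ∀ θ, tau θ = Real.cos θ * g (nu θ) + Real.sin θ * nu θ) :
    ∀ θ ∈ Set.Ioo (0 : ℝ) (π / 2),
      HasDerivAt tau (-Real.sin θ * g (nu θ) + Real.cos θ * nu θ) θ :=
  statement5_general K2 K1s hK2 hK1s A B hB ν₀ hν₀ g hg nu hnu tau htau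
end

section
/- The surface tension extends continuously to the vertical direction with value given by the dual couplings: τ(θ) → ν₀ = 2(K₁ − K₂⋆) as θ → π/2⁻. -/
/-!
As `θ → π/2⁻`, `tan θ → ∞` while `B sinh ν(θ) ≤ B sinh ν₀` stays bounded, so the saddle-point
equation forces `sinh ĝ(ν(θ)) → 0`. Then `cosh ν(θ) = (A - cosh ĝ(ν(θ))) / B → (A - 1) / B = cosh ν₀`,
and since `cosh` is injective on `[0, ∞)`, `ν(θ) → ν₀`; hence `τ(θ) → 0 · 0 + 1 · ν₀`.

For the value of `ν₀`, the duality identities `sinh 2K · sinh 2K⋆ = 1` and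
`cosh 2K = cosh 2K⋆ · sinh 2K` turn `cosh (2K₁ - 2K₂⋆)` into `(A - 1) / B`, and duality reverses
order, so `K₁⋆ < K₂` gives `K₂⋆ < K₁`.
-/

open Real Filter Set Topology

/-- Kramers–Wannier duality `exp (2K⋆) = coth K`, in the equivalent form symmetric in `K` and `K⋆`. -/
def IsDualCoupling (K Ks : ℝ) : Prop :=
  (exp (2 * K) - 1) * (exp (2 * Ks) - 1) = 2

namespace IsDualCoupling

variable {K Ks K₁ K₁s K₂ K₂s : ℝ}

lemma of_exp_eq_coth (hK : 0 < K) (h : exp (2 * Ks) = cosh K / sinh K) :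
    IsDualCoupling K Ks := by
  have hu : 0 < exp K ^ 2 - 1 := by nlinarith [one_lt_exp_iff.2 hK]
  rw [cosh_eq, sinh_eq, exp_neg] at h
  field_simp at h
  rw [IsDualCoupling, two_mul, exp_add]
  field_simp
  linear_combination h

lemma exp_sub_one_pos (h : IsDualCoupling K Ks) (hK : 0 < K) : 0 < exp (2 * Ks) - 1 := by
  have hx : 0 < exp (2 * K) - 1 := sub_pos.2 (one_lt_exp_iff.2 (by linarith))
  unfold IsDualCoupling at h
  nlinarith

lemma pos (h : IsDualCoupling K Ks) (hK : 0 < K) : 0 < Ks := by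
  linarith [one_lt_exp_iff.1 (sub_pos.1 (h.exp_sub_one_pos hK))]

lemma sinh_mul_sinh (h : IsDualCoupling K Ks) : sinh (2 * K) * sinh (2 * Ks) = 1 := by
  rw [sinh_eq, sinh_eq, exp_neg, exp_neg]
  field_simp
  unfold IsDualCoupling at h
  linear_combination ((exp (2 * K) + 1) * (exp (2 * Ks) + 1) - 2) * h

lemma cosh_eq_cosh_mul_sinh (h : IsDualCoupling K Ks) :
    cosh (2 * K) = cosh (2 * Ks) * sinh (2 * K) := by
  rw [cosh_eq, cosh_eq, sinh_eq, exp_neg, exp_neg]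
  field_simp
  unfold IsDualCoupling at h
  linear_combination -((exp (2 * K) + 1) * exp (2 * Ks) - (exp (2 * K) - 1)) * h

lemma dual_lt_of_dual_lt (h₁ : IsDualCoupling K₁ K₁s) (h₂ : IsDualCoupling K₂ K₂s)
    (hK₁ : 0 < K₁) (hlt : K₁s < K₂) : K₂s < K₁ := by
  have hx₁ : 0 < exp (2 * K₁) - 1 := sub_pos.2 (one_lt_exp_iff.2 (by linarith))
  have hy₁ := h₁.exp_sub_one_pos hK₁
  have hyx : exp (2 * K₁s) - 1 < exp (2 * K₂) - 1 := by gcongr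
  have hy₂ : exp (2 * K₂s) < exp (2 * K₁) := by
    unfold IsDualCoupling at h₁ h₂
    nlinarith
  linarith [exp_lt_exp.1 hy₂]

lemma cosh_two_mul_sub (h₁ : IsDualCoupling K₁ K₁s) (h₂ : IsDualCoupling K₂ K₂s) :
    cosh (2 * (K₁ - K₂s)) =
      (cosh (2 * K₁s) * cosh (2 * K₂) - 1) / (sinh (2 * K₁s) * sinh (2 * K₂)) := by
  have hs₁ := h₁.sinh_mul_sinh
  have hs₂ := h₂.sinh_mul_sinh
  have hne : sinh (2 * K₁s) * sinh (2 * K₂) ≠ 0 := by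
    intro h0; rcases mul_eq_zero.1 h0 with h0 | h0 <;> simp [h0] at hs₁ hs₂
  rw [mul_sub, cosh_sub, eq_div_iff hne, h₁.cosh_eq_cosh_mul_sinh, h₂.cosh_eq_cosh_mul_sinh]
  linear_combination (cosh (2 * K₁s) * cosh (2 * K₂s) * sinh (2 * K₂) - 1) * hs₁ -
    sinh (2 * K₁) * sinh (2 * K₁s) * hs₂

end IsDualCoupling

lemma Filter.Tendsto.of_cosh {α : Type*} {l : Filter α} {f : α → ℝ} {a : ℝ}
    (hf : ∀ᶠ x in l, 0 ≤ f x) (ha : 0 ≤ a) (h : Tendsto (fun x => cosh (f x)) l (𝓝 (cosh a))) :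
    Tendsto f l (𝓝 a) := by
  have h' : Tendsto (fun x => cosh (f x)) l (𝓝[Ici 1] (cosh a)) :=
    tendsto_nhdsWithin_iff.2 ⟨h, .of_forall fun x => one_le_cosh (f x)⟩
  have := (continuousOn_arcosh _ (one_le_cosh a)).tendsto.comp h'
  rw [arcosh_cosh ha] at this
  exact this.congr' (hf.mono fun x hx => arcosh_cosh hx)

lemma Filter.Tendsto.of_sinh {α : Type*} {l : Filter α} {f : α → ℝ} {a : ℝ}
    (h : Tendsto (fun x => sinh (f x)) l (𝓝 (sinh a))) : Tendsto f l (𝓝 a) := by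
  simpa only [Function.comp_def, arsinh_sinh] using (continuous_arsinh.tendsto _).comp h

section SaddlePoint

variable {A B ν₀ : ℝ} {g nu : ℝ → ℝ}

lemma tendsto_comp_saddlePoint_nhdsLT_pi_div_two (hB : 0 ≤ B)
    (hg : ∀ ν ∈ Icc 0 ν₀, 0 ≤ g ν)
    (hnu : ∀ θ ∈ Ico 0 (π / 2),
      nu θ ∈ Ico 0 ν₀ ∧ B * sinh (nu θ) = tan θ * sinh (g (nu θ))) :
    Tendsto (fun θ => g (nu θ)) (𝓝[<] (π / 2)) (𝓝 0) := by
  have hbound : ∀ᶠ θ in 𝓝[<] (π / 2), sinh (g (nu θ)) ∈ Icc 0 (B * sinh ν₀ / tan θ) := by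
    filter_upwards [Ioo_mem_nhdsLT pi_div_two_pos] with θ ⟨hθ₀, hθ⟩
    obtain ⟨⟨hnu₀, hnuν₀⟩, hsaddle⟩ := hnu θ ⟨hθ₀.le, hθ⟩
    refine ⟨sinh_nonneg_iff.2 (hg _ ⟨hnu₀, hnuν₀.le⟩), ?_⟩
    rw [le_div_iff₀ (tan_pos_of_pos_of_lt_pi_div_two hθ₀ hθ), mul_comm, ← hsaddle]
    gcongr
    exact sinh_le_sinh.2 hnuν₀.le
  have hsinh : Tendsto (fun θ => sinh (g (nu θ))) (𝓝[<] (π / 2)) (𝓝 (sinh 0)) := by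
    rw [sinh_zero]
    exact tendsto_of_tendsto_of_tendsto_of_le_of_le' tendsto_const_nhds
      (tendsto_const_nhds.div_atTop tendsto_tan_pi_div_two)
      (hbound.mono fun _ h => h.1) (hbound.mono fun _ h => h.2)
  exact hsinh.of_sinh

lemma tendsto_saddlePoint_nhdsLT_pi_div_two (hB : 0 < B) (hν₀ : 0 ≤ ν₀)
    (hcosh : cosh ν₀ = (A - 1) / B)
    (hg : ∀ ν ∈ Icc 0 ν₀, 0 ≤ g ν ∧ cosh (g ν) = A - B * cosh ν)
    (hnu : ∀ θ ∈ Ico 0 (π / 2),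
      nu θ ∈ Ico 0 ν₀ ∧ B * sinh (nu θ) = tan θ * sinh (g (nu θ))) :
    Tendsto nu (𝓝[<] (π / 2)) (𝓝 ν₀) := by
  have hev : ∀ᶠ θ in 𝓝[<] (π / 2), nu θ ∈ Ico 0 ν₀ := by
    filter_upwards [Ioo_mem_nhdsLT pi_div_two_pos] with θ hθ
    exact (hnu θ (Ioo_subset_Ico_self hθ)).1
  have hgnu := (tendsto_comp_saddlePoint_nhdsLT_pi_div_two hB.le (fun ν hν => (hg ν hν).1) hnu)
  have hcosh_nu : Tendsto (fun θ => (A - cosh (g (nu θ))) / B) (𝓝[<] (π / 2)) (𝓝 (cosh ν₀)) := by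
    rw [hcosh, ← cosh_zero]
    exact (tendsto_const_nhds.sub ((continuous_cosh.tendsto 0).comp hgnu)).div_const B
  refine Tendsto.of_cosh (hev.mono fun _ h => h.1) hν₀ (hcosh_nu.congr' ?_)
  filter_upwards [hev] with θ hθ
  rw [(hg _ (Ico_subset_Icc_self hθ)).2]
  field_simp
  ring

lemma tendsto_surfaceTension_nhdsLT_pi_div_two (hB : 0 < B) (hν₀ : 0 ≤ ν₀)
    (hcosh : cosh ν₀ = (A - 1) / B)
    (hg : ∀ ν ∈ Icc 0 ν₀, 0 ≤ g ν ∧ cosh (g ν) = A - B * cosh ν)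
    (hnu : ∀ θ ∈ Ico 0 (π / 2),
      nu θ ∈ Ico 0 ν₀ ∧ B * sinh (nu θ) = tan θ * sinh (g (nu θ))) :
    Tendsto (fun θ => cos θ * g (nu θ) + sin θ * nu θ) (𝓝[<] (π / 2)) (𝓝 ν₀) := by
  have hcos : Tendsto cos (𝓝[<] (π / 2)) (𝓝 0) := by
    rw [← cos_pi_div_two]; exact tendsto_nhdsWithin_of_tendsto_nhds (continuous_cos.tendsto _)
  have hsin : Tendsto sin (𝓝[<] (π / 2)) (𝓝 1) := by
    rw [← sin_pi_div_two]; exact tendsto_nhdsWithin_of_tendsto_nhds (continuous_sin.tendsto _)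
  simpa using (hcos.mul (tendsto_comp_saddlePoint_nhdsLT_pi_div_two hB.le (fun ν hν => (hg ν hν).1)
    hnu)).add (hsin.mul (tendsto_saddlePoint_nhdsLT_pi_div_two hB hν₀ hcosh hg hnu))

end SaddlePoint

theorem statement7_general
    (K1 K2 K1s K2s : ℝ)
    (hK1 : 0 < K1) (hK2 : 0 < K2)
    (hdual1 : Real.exp (2 * K1s) = Real.cosh K1 / Real.sinh K1)
    (hdual2 : Real.exp (2 * K2s) = Real.cosh K2 / Real.sinh K2)
    (hlow : K1s < K2)
    (A B : ℝ)
    (hA : A = Real.cosh (2 * K1s) * Real.cosh (2 * K2))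
    (hB : B = Real.sinh (2 * K1s) * Real.sinh (2 * K2))
    (ν₀ : ℝ) (hν₀pos : 0 < ν₀)
    (hν₀ : Real.cosh ν₀ = (A - 1) / B)
    (g : ℝ → ℝ)
    (hg : ∀ ν ∈ Set.Icc (0 : ℝ) ν₀,
      0 ≤ g ν ∧ Real.cosh (g ν) = A - B * Real.cosh ν)
    (nu : ℝ → ℝ)
    (hnu : ∀ θ ∈ Set.Ico (0 : ℝ) (π / 2),
      nu θ ∈ Set.Ico (0 : ℝ) ν₀ ∧
      B * Real.sinh (nu θ) = Real.tan θ * Real.sinh (g (nu θ)))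
    (tau : ℝ → ℝ)
    (htau : ∀ θ, tau θ = Real.cos θ * g (nu θ) + Real.sin θ * nu θ) :
    Tendsto tau (nhdsWithin (π / 2) (Set.Iio (π / 2))) (nhds ν₀) ∧
    ν₀ = 2 * (K1 - K2s) := by
  have hd₁ := IsDualCoupling.of_exp_eq_coth hK1 hdual1
  have hd₂ := IsDualCoupling.of_exp_eq_coth hK2 hdual2
  have hBpos : 0 < B :=
    hB ▸ mul_pos (sinh_pos_iff.2 (by linarith [hd₁.pos hK1])) (sinh_pos_iff.2 (by linarith))
  refine ⟨?_, ?_⟩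
  · rw [funext htau]
    exact tendsto_surfaceTension_nhdsLT_pi_div_two hBpos hν₀pos.le hν₀ hg hnu
  · have hK₂s : K2s < K1 := hd₁.dual_lt_of_dual_lt hd₂ hK1 hlow
    refine cosh_injOn (mem_Ici.2 hν₀pos.le) (mem_Ici.2 (by linarith)) ?_
    rw [hν₀, hA, hB, hd₁.cosh_two_mul_sub hd₂]

/-- The surface tension extends continuously to the vertical
direction with value given by the dual couplings:
`τ(θ) → ν₀ = 2(K₁ − K₂⋆)` as `θ → π/2⁻`. -/
theorem statement7
    (K1 K2 K1s K2s : ℝ)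
    (hK1 : 0 < K1) (hK2 : 0 < K2) (hK1s : 0 < K1s) (hK2s : 0 < K2s)
    (hdual1 : Real.exp (2 * K1s) = Real.cosh K1 / Real.sinh K1)
    (hdual2 : Real.exp (2 * K2s) = Real.cosh K2 / Real.sinh K2)
    (hlow : K1s < K2)
    (A B : ℝ)
    (hA : A = Real.cosh (2 * K1s) * Real.cosh (2 * K2))
    (hB : B = Real.sinh (2 * K1s) * Real.sinh (2 * K2))
    (ν₀ : ℝ) (hν₀pos : 0 < ν₀)
    (hν₀ : Real.cosh ν₀ = (A - 1) / B)
    (g : ℝ → ℝ)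
    (hg : ∀ ν ∈ Set.Icc (0 : ℝ) ν₀,
      0 ≤ g ν ∧ Real.cosh (g ν) = A - B * Real.cosh ν)
    (nu : ℝ → ℝ)
    (hnu : ∀ θ ∈ Set.Ico (0 : ℝ) (π / 2),
      nu θ ∈ Set.Ico (0 : ℝ) ν₀ ∧
      B * Real.sinh (nu θ) = Real.tan θ * Real.sinh (g (nu θ)))
    (tau : ℝ → ℝ)
    (htau : ∀ θ, tau θ = Real.cos θ * g (nu θ) + Real.sin θ * nu θ) :
    Tendsto tau (nhdsWithin (π / 2) (Set.Iio (π / 2))) (nhds ν₀) ∧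
    ν₀ = 2 * (K1 - K2s) :=
  statement7_general K1 K2 K1s K2s hK1 hK2 hdual1 hdual2 hlow A B hA hB ν₀ hν₀pos hν₀ g hg nu hnu
    tau htau
end

section
/- For every real z > 0 one has the identity (1/2π)·∫_{−∞}^{+∞} e^{−u²}/(z + iu) du = (e^{z²}/√π)·∫_{z}^{+∞} e^{−u²} du; equivalently, F(z) = ½·e^{z²}·erfc(z). -/
/-!
For `Re w > 0` write `1 / (w + i u) = ∫₀^∞ e^{-(w + i u) t} dt` and swap the integrals (Fubini,
the integrand being dominated by `e^{-u²} e^{-(Re w) t}`). The inner integral over `u` is the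
Fourier transform of the Gaussian, `√π e^{-t²/4}`, which leaves `√π ∫₀^∞ e^{-w t - t²/4} dt`.
For real `w = z`, completing the square `z t + t²/4 = (z + t/2)² - z²` and substituting
`s = z + t/2` turn this into `2 √π e^{z²} ∫_z^∞ e^{-s²} ds`.
-/

open MeasureTheory Set Complex Real

lemma integral_cexp_neg_mul_Ioi {w : ℂ} (hw : 0 < w.re) :
    ∫ t in Ioi (0 : ℝ), cexp (-w * t) = w⁻¹ := by
  rw [integral_exp_mul_complex_Ioi (by simpa using hw)]
  simp [neg_div]

lemma integral_cexp_neg_sq_sub_mul (w : ℂ) (t : ℝ) :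
    ∫ u : ℝ, cexp (-(u : ℂ) ^ 2 - (w + I * u) * t) = √π * cexp (-(w * t + t ^ 2 / 4)) := by
  have h := integral_cexp_quadratic (b := -1) (by simp) (-I * t) (-w * t)
  have hsqrt : ((π : ℂ) / - -1) ^ (1 / 2 : ℂ) = (√π : ℂ) := by
    rw [neg_neg, div_one, Real.sqrt_eq_rpow, Complex.ofReal_cpow Real.pi_pos.le]
    norm_num
  rw [hsqrt] at h
  convert h using 1
  · congr 1; ext u; congr 1; ring
  · congr 2; linear_combination (-(t : ℂ) ^ 2 / 4) * I_sq

lemma integrable_cexp_neg_sq_sub_mul_prod {w : ℂ} (hw : 0 < w.re) :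
    Integrable (fun p : ℝ × ℝ => cexp (-(p.1 : ℂ) ^ 2 - (w + I * p.1) * p.2))
      (volume.prod (volume.restrict (Ioi 0))) := by
  have hbound : Integrable (fun p : ℝ × ℝ => rexp (-p.1 ^ 2) * rexp (-w.re * p.2))
      (volume.prod (volume.restrict (Ioi 0))) :=
    (by simpa using integrable_exp_neg_mul_sq one_pos :
      Integrable fun u : ℝ => rexp (-u ^ 2)).mul_prod (exp_neg_integrableOn_Ioi 0 hw)
  refine hbound.mono' (by fun_prop) (Filter.Eventually.of_forall fun p => le_of_eq ?_)
  rw [Complex.norm_exp, ← Real.exp_add]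
  congr 1
  simp [← Complex.ofReal_pow, sub_eq_add_neg]

theorem integral_exp_neg_sq_div_add_I_mul {w : ℂ} (hw : 0 < w.re) :
    ∫ u : ℝ, (rexp (-u ^ 2) : ℂ) / (w + I * u) =
      √π * ∫ t in Ioi (0 : ℝ), cexp (-(w * t + t ^ 2 / 4)) := by
  have hre (u : ℝ) : 0 < (w + I * u).re := by simpa using hw
  have laplace (u : ℝ) : (rexp (-u ^ 2) : ℂ) / (w + I * u) =
      ∫ t in Ioi (0 : ℝ), cexp (-(u : ℂ) ^ 2 - (w + I * u) * t) := by
    simp_rw [sub_eq_add_neg, Complex.exp_add, integral_const_mul, neg_mul_eq_neg_mul,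
      integral_cexp_neg_mul_Ioi (hre u), div_eq_mul_inv]
    push_cast
    rfl
  simp_rw [laplace]
  rw [integral_integral_swap (integrable_cexp_neg_sq_sub_mul_prod hw)]
  simp_rw [integral_cexp_neg_sq_sub_mul, integral_const_mul]

lemma setIntegral_Ioi_comp_add_right {E : Type*} [NormedAddCommGroup E] [NormedSpace ℝ E]
    (f : ℝ → E) (a c : ℝ) :
    ∫ x in Ioi a, f (x + c) = ∫ x in Ioi (a + c), f x := by
  have h := (measurePreserving_add_right volume c).setIntegral_preimage_emb
    (measurableEmbedding_addRight c) f (Ioi (a + c))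
  rwa [preimage_add_const_Ioi, add_sub_cancel_right] at h

lemma integral_exp_neg_mul_add_sq_div_four_Ioi (z : ℝ) :
    ∫ t in Ioi (0 : ℝ), rexp (-(z * t + t ^ 2 / 4)) =
      2 * rexp (z ^ 2) * ∫ s in Ioi z, rexp (-s ^ 2) := by
  have hsq (t : ℝ) : rexp (-(z * t + t ^ 2 / 4)) = rexp (z ^ 2) * rexp (-(2⁻¹ * t + z) ^ 2) := by
    rw [← Real.exp_add]; ring_nf
  simp_rw [hsq]
  rw [integral_const_mul,
    integral_comp_mul_left_Ioi (fun s => rexp (-(s + z) ^ 2)) 0 (by norm_num : (0 : ℝ) < 2⁻¹),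
    mul_zero, setIntegral_Ioi_comp_add_right (fun s => rexp (-s ^ 2)), zero_add, smul_eq_mul,
    inv_inv, ← mul_assoc, mul_comm (rexp _) 2]

/-- For every real `z > 0`,
`(1/2π) ∫_{−∞}^{∞} e^{−u²}/(z + iu) du = (e^{z²}/√π) ∫_z^{∞} e^{−u²} du`;
equivalently, `F(z) = ½ e^{z²} erfc(z)` with
`erfc(z) = (2/√π) ∫_z^{∞} e^{−u²} du`. -/
theorem statement9 (z : ℝ) (hz : 0 < z) :
    (1 / (2 * (Real.pi : ℂ))) *
        ∫ u : ℝ, (Real.exp (-u ^ 2) : ℂ) / ((z : ℂ) + Complex.I * u) =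
      ((Real.exp (z ^ 2) / Real.sqrt Real.pi *
        ∫ u in Set.Ioi z, Real.exp (-u ^ 2) : ℝ) : ℂ) ∧
    (1 / (2 * (Real.pi : ℂ))) *
        ∫ u : ℝ, (Real.exp (-u ^ 2) : ℂ) / ((z : ℂ) + Complex.I * u) =
      ((1 / 2 * Real.exp (z ^ 2) *
        (2 / Real.sqrt Real.pi * ∫ u in Set.Ioi z, Real.exp (-u ^ 2)) : ℝ) : ℂ) := by
  have hF : ∫ u : ℝ, (rexp (-u ^ 2) : ℂ) / ((z : ℂ) + I * u) =
      ((√π * (2 * rexp (z ^ 2) * ∫ s in Ioi z, rexp (-s ^ 2)) : ℝ) : ℂ) := by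
    rw [integral_exp_neg_sq_div_add_I_mul (by simpa using hz),
      ← integral_exp_neg_mul_add_sq_div_four_Ioi, Complex.ofReal_mul, ← integral_complex_ofReal]
    push_cast
    rfl
  have hπ : (√π : ℂ) ^ 2 = π := by exact_mod_cast Real.sq_sqrt Real.pi_pos.le
  have hsqrt : (√π : ℂ) ≠ 0 := by exact_mod_cast (Real.sqrt_pos.2 Real.pi_pos).ne'
  refine ⟨?_, ?_⟩ <;>
  · rw [hF, ← hπ]
    push_cast
    field_simp
end

section
/- Fix nonnegative integers m and n, and let (a_N) and (b_N) be sequences of natural numbers with a_N → ∞ and b_N/a_N → t for some real t ∈ (0,∞) (so in particular b_N → ∞ and eventually b_N ≥ n). Then the ratio of binomial coefficients C(a_N + b_N − m − n, b_N − n) / C(a_N + b_N, b_N) converges, as N → ∞, to p^n·(1−p)^m, where p = t/(1+t). -/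
open Filter Topology Asymptotics

/-!
Cancelling factorials, `C(a+b-m-n, b-n) / C(a+b, b)` equals the product of falling factorials
`b^(n) a^(m) / (a+b)^(m+n)`. Since `a, b → ∞`, each falling factorial `x^(k)` is asymptotic to
`x^k`, so the ratio is asymptotic to `(b/(a+b))^n (a/(a+b))^m`, and
`b/(a+b) = (b/a) / (1 + b/a) → t/(1+t)`.
-/

theorem Nat.cast_descFactorial_eq_div (K : Type*) [DivisionSemiring K] [CharZero K] {x k : ℕ}
    (h : k ≤ x) : (x.descFactorial k : K) = x.factorial / (x - k).factorial := by
  rw [eq_div_iff (by exact_mod_cast (x - k).factorial_ne_zero), ← Nat.cast_mul, Nat.mul_comm,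
    Nat.factorial_mul_descFactorial h]

theorem Nat.cast_choose_sub_div_choose (K : Type*) [Field K] [CharZero K] {a b m n : ℕ}
    (hm : m ≤ a) (hn : n ≤ b) :
    ((a + b - m - n).choose (b - n) : K) / (a + b).choose b =
      b.descFactorial n * a.descFactorial m / (a + b).descFactorial (m + n) := by
  rw [cast_choose K (by omega : b - n ≤ a + b - m - n), cast_choose K (by omega : b ≤ a + b),
    cast_descFactorial_eq_div K hn, cast_descFactorial_eq_div K hm,
    cast_descFactorial_eq_div K (by omega : m + n ≤ a + b),
    show a + b - m - n - (b - n) = a - m by omega, show a + b - (m + n) = a + b - m - n by omega,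
    Nat.add_sub_cancel]
  field_simp

theorem Filter.Tendsto.div_add_of_tendsto_div {ι : Type*} {l : Filter ι} {x y : ι → ℝ}
    {t : ℝ} (h : Tendsto (fun i => y i / x i) l (𝓝 t)) (hx : ∀ᶠ i in l, x i ≠ 0)
    (ht : 1 + t ≠ 0) :
    Tendsto (fun i => y i / (x i + y i)) l (𝓝 (t / (1 + t))) := by
  refine (h.div (tendsto_const_nhds.add h) ht).congr' ?_
  filter_upwards [hx] with i hxi
  rw [Pi.div_apply, one_add_div hxi, div_div_div_cancel_right₀ hxi]

theorem Asymptotics.isEquivalent_descFactorial_mul_descFactorial_div {ι : Type*} {l : Filter ι}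
    {a b : ι → ℕ} (ha : Tendsto a l atTop) (hb : Tendsto b l atTop) (m n : ℕ) :
    (fun i => ((b i).descFactorial n * (a i).descFactorial m /
      (a i + b i).descFactorial (m + n) : ℝ)) ~[l]
      fun i => ((b i : ℝ) / (a i + b i)) ^ n * ((a i : ℝ) / (a i + b i)) ^ m := by
  have hab : Tendsto (fun i => a i + b i) l atTop :=
    tendsto_atTop_mono (fun i => Nat.le_add_right _ _) ha
  refine ((((isEquivalent_descFactorial n).comp_tendsto hb).mul
    ((isEquivalent_descFactorial m).comp_tendsto ha)).div
    ((isEquivalent_descFactorial (m + n)).comp_tendsto hab)).congr_right (.of_forall fun i => ?_)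
  simp only [Function.comp_apply, Pi.mul_apply, Pi.div_apply, Nat.cast_add]
  rw [div_pow, div_pow, pow_add, mul_comm ((_ : ℝ) ^ m), mul_div_mul_comm]

/-- Fix nonnegative integers `m` and `n`, and let `(a_N)`,
`(b_N)` be sequences of natural numbers with `a_N → ∞` and `b_N/a_N → t` for
some real `t ∈ (0, ∞)`.  Then
`C(a_N + b_N − m − n, b_N − n) / C(a_N + b_N, b_N) → pⁿ (1−p)ᵐ` as `N → ∞`,
where `p = t/(1+t)`. -/
theorem statement10 (m n : ℕ) (a b : ℕ → ℕ) (t : ℝ) (ht : 0 < t)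
    (ha : Tendsto a atTop atTop)
    (hb : Tendsto (fun N => (b N : ℝ) / (a N : ℝ)) atTop (nhds t)) :
    Tendsto
      (fun N => ((a N + b N - m - n).choose (b N - n) : ℝ) /
        ((a N + b N).choose (b N) : ℝ))
      atTop
      (nhds ((t / (1 + t)) ^ n * (1 - t / (1 + t)) ^ m)) := by
  have ha_ne : ∀ᶠ N in atTop, (a N : ℝ) ≠ 0 := by
    filter_upwards [ha.eventually_ge_atTop 1] with N hN
    exact_mod_cast Nat.one_le_iff_ne_zero.mp hN
  have hb_top : Tendsto b atTop atTop := by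
    refine tendsto_natCast_atTop_iff.mp <| (hb.pos_mul_atTop ht
      (tendsto_natCast_atTop_iff.mpr ha)).congr' ?_
    filter_upwards [ha_ne] with N hN
    exact div_mul_cancel₀ _ hN
  have hp : Tendsto (fun N => (b N : ℝ) / (a N + b N)) atTop (𝓝 (t / (1 + t))) :=
    hb.div_add_of_tendsto_div ha_ne (by positivity)
  have hq : Tendsto (fun N => (a N : ℝ) / (a N + b N)) atTop (𝓝 (1 - t / (1 + t))) := by
    refine (tendsto_const_nhds.sub hp).congr' ?_
    filter_upwards [ha_ne] with N hN
    have : (a N : ℝ) + b N ≠ 0 := by positivity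
    field_simp
    ring
  have hratio := (isEquivalent_descFactorial_mul_descFactorial_div ha hb_top m n).congr_left <| by
    filter_upwards [ha.eventually_ge_atTop m, hb_top.eventually_ge_atTop n] with N hm hn
    exact (Nat.cast_choose_sub_div_choose ℝ hm hn).symm
  exact hratio.tendsto_nhds_iff.mpr ((hp.pow n).mul (hq.pow m))
end

section
/- Fix t ∈ (0,∞) and ε ∈ (0,1/2). Let (a_N) and (b_N) be sequences of natural numbers with a_N → ∞ and b_N/a_N → t, and set n_N = a_N + b_N. Let S_N be a uniformly distributed random b_N-element subset of {1,…,n_N}. Then the probability that there exists k ∈ {1,…,n_N} with | #(S_N ∩ {1,…,k}) − k·b_N/n_N | > n_N^{1/2+ε} tends to 0 as N → ∞. -/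
/-!
For fixed `k`, the number of `b`-subsets `S ⊆ {1,…,n}` with `#(S ∩ {1,…,k}) = j` is the
hypergeometric weight `C(k, j) C(n - k, b - j)`. The ratio of consecutive weights shows that
once `j` exceeds the mean `k b / n` by `d / 2`, each further step multiplies the weight by at
most `1 - d / (2n) ≤ exp (-d / (2n))`; hence every weight beyond the mean plus `d` is at most
`exp (-d² / (8n)) C(n, b)`. The lower tail is the upper tail of the complementary count
`#(S ∩ {k+1,…,n})`. Summing over `j` and `k`, with `d = n^(1/2+ε)`, the probability in
question is at most `4 n² exp (-n^(2ε) / 8)`, which tends to `0`.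
-/

open Filter Finset Real

open scoped Classical

def hypergeomWeight (k l b j : ℕ) : ℕ := k.choose j * l.choose (b - j)

namespace hypergeomWeight

variable {k l b j : ℕ}

theorem le_choose (hj : j ≤ b) : hypergeomWeight k l b j ≤ (k + l).choose b := by
  rw [Nat.add_choose_eq]
  exact single_le_sum (f := fun ij : ℕ × ℕ => k.choose ij.1 * l.choose ij.2)
    (fun _ _ => Nat.zero_le _) (a := (j, b - j))
    (mem_antidiagonal.mpr (Nat.add_sub_cancel' hj))

theorem succ_mul (hjk : j < k) (hjb : j < b) (hbl : b ≤ l + j + 1) :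
    (hypergeomWeight k l b (j + 1) : ℝ) * ((j + 1) * (l + j + 1 - b)) =
      hypergeomWeight k l b j * ((k - j) * (b - j)) := by
  obtain ⟨c, rfl⟩ : ∃ c, k = j + 1 + c := ⟨k - (j + 1), by omega⟩
  obtain ⟨i, rfl⟩ : ∃ i, b = j + 1 + i := ⟨b - (j + 1), by omega⟩
  obtain ⟨e, rfl⟩ : ∃ e, l = i + e := ⟨l - i, by omega⟩
  have hk := Nat.choose_succ_right_eq (j + 1 + c) j
  have hl := Nat.choose_succ_right_eq (i + e) i
  rw [show j + 1 + c - j = c + 1 by omega] at hk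
  rw [show i + e - i = e by omega] at hl
  simp only [hypergeomWeight, show j + 1 + i - (j + 1) = i by omega,
    show j + 1 + i - j = i + 1 by omega]
  have hk' : ((j + 1 + c).choose (j + 1) : ℝ) * (j + 1) = (j + 1 + c).choose j * (c + 1) := by
    exact_mod_cast hk
  have hl' : ((i + e).choose (i + 1) : ℝ) * (i + 1) = (i + e).choose i * e := by
    exact_mod_cast hl
  push_cast
  linear_combination
    ((i + e).choose i * e : ℝ) * hk' - ((j + 1 + c).choose j * (c + 1) : ℝ) * hl'

theorem succ_le {d : ℝ} (hd : 0 ≤ d) (hbn : b ≤ k + l) (hjb : j < b)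
    (hj : (k * b : ℝ) / (k + l) + d / 2 ≤ j) :
    (hypergeomWeight k l b (j + 1) : ℝ) ≤
      exp (-(d / (2 * (k + l)))) * hypergeomWeight k l b j := by
  have hn : (0 : ℝ) < k + l := by exact_mod_cast (show 0 < k + l by omega)
  have hw : (0 : ℝ) ≤ hypergeomWeight k l b j := Nat.cast_nonneg _
  rcases le_or_gt k j with hkj | hjk
  · simp only [hypergeomWeight, Nat.choose_eq_zero_of_lt (show k < j + 1 by omega), zero_mul,
      Nat.cast_zero]
    positivity
  have hbn' : (b : ℝ) ≤ k + l := by exact_mod_cast hbn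
  have hjk' : (j : ℝ) + 1 ≤ k := by exact_mod_cast hjk
  have hjb' : (j : ℝ) + 1 ≤ b := by exact_mod_cast hjb
  have hmean : (j * (k + l) : ℝ) - k * b ≥ d * (k + l) / 2 := by
    have := mul_le_mul_of_nonneg_right hj hn.le
    rw [add_mul, div_mul_cancel₀ _ hn.ne'] at this
    linarith
  -- the mean `k b / (k + l)` is at least `b - l`
  have hbl : (b : ℝ) ≤ l + j := by nlinarith [Nat.cast_nonneg (α := ℝ) l]
  have hrec := succ_mul hjk hjb (by exact_mod_cast (show (b : ℝ) ≤ l + j + 1 by linarith))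
  set X : ℝ := (j + 1) * (l + j + 1 - b)
  set Y : ℝ := (k - j) * (b - j)
  have hX : 0 < X := mul_pos (by positivity) (by linarith)
  have hXn : X ≤ (k + l) ^ 2 := by nlinarith
  have hXY : Y ≤ (1 - d / (2 * (k + l))) * X := by
    have hgap : X - Y = (j * (k + l) - k * b) + (2 * j + 1 + l - b) := by ring
    have hshrink : d / (2 * (k + l)) * X ≤ d * (k + l) / 2 := by
      calc d / (2 * (k + l)) * X ≤ d / (2 * (k + l)) * (k + l) ^ 2 := by gcongr
        _ = d * (k + l) / 2 := by field_simp
    nlinarith [Nat.cast_nonneg (α := ℝ) j]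
  have hq : 1 - d / (2 * (k + l)) ≤ exp (-(d / (2 * (k + l)))) := by
    linarith [add_one_le_exp (-(d / (2 * (k + l))))]
  calc (hypergeomWeight k l b (j + 1) : ℝ)
      ≤ (1 - d / (2 * (k + l))) * hypergeomWeight k l b j := by
        refine le_of_mul_le_mul_right ?_ hX
        rw [hrec, mul_comm (1 - _ : ℝ), mul_assoc]
        exact mul_le_mul_of_nonneg_left hXY hw
    _ ≤ _ := mul_le_mul_of_nonneg_right hq hw

theorem le_of_mean_add_lt {d : ℝ} (hd : 4 ≤ d) (hbn : b ≤ k + l) (hjb : j ≤ b)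
    (hj : (k * b : ℝ) / (k + l) + d < j) :
    (hypergeomWeight k l b j : ℝ) ≤ exp (-(d ^ 2 / (8 * (k + l)))) * (k + l).choose b := by
  set μ : ℝ := k * b / (k + l)
  set j₀ := ⌈μ + d / 2⌉₊
  have hμ : 0 ≤ μ := by positivity
  have hj₀ : (j₀ : ℝ) < μ + d / 2 + 1 := Nat.ceil_lt_add_one (by positivity)
  have hj₀j : j₀ ≤ j := by exact_mod_cast (show (j₀ : ℝ) ≤ j by linarith)
  have hn : (0 : ℝ) < k + l := by
    have : 0 < j := by exact_mod_cast (show (0 : ℝ) < j by linarith)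
    exact_mod_cast (show 0 < k + l by omega)
  have hdecay := le_geom (u := fun i => (hypergeomWeight k l b (j₀ + i) : ℝ))
    (exp_pos (-(d / (2 * (k + l))))).le (j - j₀) fun i hi => by
      have hi' : j₀ + i < b := by omega
      have hμi : μ + d / 2 ≤ ((j₀ + i : ℕ) : ℝ) := by
        push_cast; linarith [Nat.le_ceil (μ + d / 2), (Nat.cast_nonneg i : (0 : ℝ) ≤ i)]
      exact succ_le (by linarith) hbn hi' hμi
  simp only [Nat.add_sub_cancel' hj₀j, add_zero] at hdecay
  have hsteps : d / 4 ≤ ((j - j₀ : ℕ) : ℝ) := by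
    rw [Nat.cast_sub hj₀j]
    linarith
  have hexp : exp (-(d / (2 * (k + l)))) ^ (j - j₀) ≤ exp (-(d ^ 2 / (8 * (k + l)))) := by
    rw [← exp_nat_mul, exp_le_exp]
    have : d / 4 * (d / (2 * (k + l))) ≤ ((j - j₀ : ℕ) : ℝ) * (d / (2 * (k + l))) := by
      gcongr
    have hsq : d / 4 * (d / (2 * (k + l))) = d ^ 2 / (8 * (k + l)) := by field_simp; ring
    linarith
  calc (hypergeomWeight k l b j : ℝ)
      ≤ exp (-(d / (2 * (k + l)))) ^ (j - j₀) * hypergeomWeight k l b j₀ := hdecay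
    _ ≤ exp (-(d ^ 2 / (8 * (k + l)))) * (k + l).choose b :=
      mul_le_mul hexp (by exact_mod_cast le_choose (hj₀j.trans hjb)) (Nat.cast_nonneg _)
        (exp_pos _).le

end hypergeomWeight

section

variable {α : Type*} [DecidableEq α]

theorem card_filter_card_inter_eq {s t : Finset α} (hst : s ⊆ t) {b j : ℕ} (hj : j ≤ b) :
    #{S ∈ t.powersetCard b | #(S ∩ s) = j} = hypergeomWeight #s #(t \ s) b j := by
  rw [hypergeomWeight, ← card_powersetCard, ← card_powersetCard, ← card_product]
  refine card_nbij' (fun S => (S ∩ s, S \ s)) (fun P => P.1 ∪ P.2) ?_ ?_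
    (fun S _ => sup_inf_sdiff S s) ?_
  · intro S hS
    simp only [mem_coe, mem_filter, mem_powersetCard] at hS
    simp only [coe_product, Set.mem_prod, mem_coe, mem_powersetCard]
    refine ⟨⟨inter_subset_right, hS.2⟩, sdiff_subset_sdiff hS.1.1 subset_rfl, ?_⟩
    have := card_inter_add_card_sdiff S s
    omega
  · rintro ⟨A, B⟩ hP
    simp only [coe_product, Set.mem_prod, mem_coe, mem_powersetCard] at hP
    obtain ⟨⟨hAs, hA⟩, hBts, hB⟩ := hP
    have hBs : Disjoint B s := disjoint_of_subset_left hBts sdiff_disjoint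
    simp only [mem_coe, mem_filter, mem_powersetCard]
    refine ⟨⟨union_subset (hAs.trans hst) (hBts.trans sdiff_subset), ?_⟩, ?_⟩
    · rw [card_union_of_disjoint (disjoint_of_subset_left hAs hBs.symm)]; omega
    · rw [union_inter_distrib_right, inter_eq_left.mpr hAs, disjoint_iff_inter_eq_empty.mp hBs,
        union_empty, hA]
  · rintro ⟨A, B⟩ hP
    simp only [coe_product, Set.mem_prod, mem_coe, mem_powersetCard] at hP
    ext x <;> grind

theorem card_filter_mean_add_lt_card_inter_le {s t : Finset α} (hst : s ⊆ t) (b : ℕ) {d : ℝ}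
    (hd : 4 ≤ d) :
    (#{S ∈ t.powersetCard b | (#s * b : ℝ) / #t + d < #(S ∩ s)} : ℝ) ≤
      (b + 1) * (exp (-(d ^ 2 / (8 * #t))) * (#t).choose b) := by
  rcases lt_or_ge #t b with hbt | hbt
  · rw [powersetCard_eq_empty.mpr hbt, filter_empty, card_empty, Nat.cast_zero]
    positivity
  have hcard : #s + #(t \ s) = #t := by rw [add_comm]; exact card_sdiff_add_card_eq_card hst
  have hcard' : (#s : ℝ) + #(t \ s) = #t := by exact_mod_cast hcard
  set J : Finset ℕ := {j ∈ range (b + 1) | (#s * b : ℝ) / #t + d < j}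
  have hsub : {S ∈ t.powersetCard b | (#s * b : ℝ) / #t + d < #(S ∩ s)} ⊆
      J.biUnion fun j => {S ∈ t.powersetCard b | #(S ∩ s) = j} := by
    intro S hS
    simp only [mem_filter, mem_powersetCard] at hS
    have : #(S ∩ s) ≤ b := hS.1.2 ▸ card_le_card inter_subset_left
    simp only [mem_biUnion, mem_filter, mem_range, mem_powersetCard, J]
    exact ⟨_, ⟨by omega, hS.2⟩, hS.1, rfl⟩
  calc (#{S ∈ t.powersetCard b | (#s * b : ℝ) / #t + d < #(S ∩ s)} : ℝ)
      ≤ ∑ j ∈ J, (#{S ∈ t.powersetCard b | #(S ∩ s) = j} : ℝ) := by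
        exact_mod_cast (card_le_card hsub).trans card_biUnion_le
    _ ≤ ∑ _j ∈ J, exp (-(d ^ 2 / (8 * #t))) * (#t).choose b := by
        refine sum_le_sum fun j hj => ?_
        simp only [mem_filter, mem_range, J] at hj
        have hjb : j ≤ b := by omega
        rw [card_filter_card_inter_eq hst hjb]
        have := hypergeomWeight.le_of_mean_add_lt (k := #s) (l := #(t \ s)) hd (by omega) hjb
          (hcard' ▸ hj.2)
        rwa [hcard', hcard] at this
    _ = #J * (exp (-(d ^ 2 / (8 * #t))) * (#t).choose b) := by rw [sum_const, nsmul_eq_mul]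
    _ ≤ (b + 1) * (exp (-(d ^ 2 / (8 * #t))) * (#t).choose b) := by
        gcongr
        exact_mod_cast (card_filter_le _ _).trans (card_range _).le

theorem card_filter_lt_abs_card_inter_sub_le {s t : Finset α} (hst : s ⊆ t) (b : ℕ) {d : ℝ}
    (hd : 4 ≤ d) :
    (#{S ∈ t.powersetCard b | d < |(#(S ∩ s) : ℝ) - #s * b / #t|} : ℝ) ≤
      2 * ((b + 1) * (exp (-(d ^ 2 / (8 * #t))) * (#t).choose b)) := by
  have hcard : (#s : ℝ) + #(t \ s) = #t := by
    rw [add_comm]; exact_mod_cast card_sdiff_add_card_eq_card hst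
  have hmeans : (#s * b : ℝ) / #t + #(t \ s) * b / #t ≤ b := by
    rw [← add_div, ← add_mul, hcard]
    rcases eq_or_ne (#t : ℝ) 0 with ht | ht
    · simp [ht]
    · rw [mul_div_cancel_left₀ _ ht]
  -- The lower tail of `#(S ∩ s)` is the upper tail of `#(S ∩ (t \ s)) = b - #(S ∩ s)`.
  have hsub : {S ∈ t.powersetCard b | d < |(#(S ∩ s) : ℝ) - #s * b / #t|} ⊆
      {S ∈ t.powersetCard b | (#s * b : ℝ) / #t + d < #(S ∩ s)} ∪
        {S ∈ t.powersetCard b | (#(t \ s) * b : ℝ) / #t + d < #(S ∩ (t \ s))} := by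
    intro S hS
    simp only [mem_filter, mem_powersetCard] at hS
    obtain ⟨⟨hSt, hSb⟩, hdev⟩ := hS
    have hsplit : (#(S ∩ s) : ℝ) + #(S ∩ (t \ s)) = b := by
      rw [← inter_sdiff_assoc, inter_eq_left.mpr hSt, ← hSb]
      exact_mod_cast card_inter_add_card_sdiff S s
    simp only [mem_union, mem_filter, mem_powersetCard]
    rcases lt_abs.mp hdev with h | h
    · exact .inl ⟨⟨hSt, hSb⟩, by linarith⟩
    · exact .inr ⟨⟨hSt, hSb⟩, by linarith⟩
  calc (#{S ∈ t.powersetCard b | d < |(#(S ∩ s) : ℝ) - #s * b / #t|} : ℝ)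
      ≤ #{S ∈ t.powersetCard b | (#s * b : ℝ) / #t + d < #(S ∩ s)} +
        #{S ∈ t.powersetCard b | (#(t \ s) * b : ℝ) / #t + d < #(S ∩ (t \ s))} := by
        exact_mod_cast (card_le_card hsub).trans (card_union_le _ _)
    _ ≤ _ := by
        linarith [card_filter_mean_add_lt_card_inter_le hst b hd,
          card_filter_mean_add_lt_card_inter_le (sdiff_subset : t \ s ⊆ t) b hd]

end

theorem card_filter_exists_lt_abs_card_inter_Icc_sub_le (n b : ℕ) {d : ℝ} (hd : 4 ≤ d) :
    (#{S ∈ (Icc 1 n).powersetCard b |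
        ∃ k ∈ Icc 1 n, d < |(#(S ∩ Icc 1 k) : ℝ) - k * b / n|} : ℝ) ≤
      n * (2 * ((b + 1) * (exp (-(d ^ 2 / (8 * n))) * n.choose b))) := by
  have hsub : {S ∈ (Icc 1 n).powersetCard b |
        ∃ k ∈ Icc 1 n, d < |(#(S ∩ Icc 1 k) : ℝ) - k * b / n|} ⊆
      (Icc 1 n).biUnion fun k =>
        {S ∈ (Icc 1 n).powersetCard b | d < |(#(S ∩ Icc 1 k) : ℝ) - k * b / n|} := by
    intro S hS
    simp only [mem_filter] at hS
    obtain ⟨hS, k, hk, hdev⟩ := hS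
    exact mem_biUnion.mpr ⟨k, hk, mem_filter.mpr ⟨hS, hdev⟩⟩
  calc (#{S ∈ (Icc 1 n).powersetCard b |
        ∃ k ∈ Icc 1 n, d < |(#(S ∩ Icc 1 k) : ℝ) - k * b / n|} : ℝ)
      ≤ ∑ k ∈ Icc 1 n,
          (#{S ∈ (Icc 1 n).powersetCard b | d < |(#(S ∩ Icc 1 k) : ℝ) - k * b / n|} : ℝ) :=
        mod_cast (card_le_card hsub).trans card_biUnion_le
    _ ≤ ∑ _k ∈ Icc 1 n, 2 * ((b + 1) * (exp (-(d ^ 2 / (8 * n))) * n.choose b)) := by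
        refine sum_le_sum fun k hk => ?_
        have := card_filter_lt_abs_card_inter_sub_le
          (Icc_subset_Icc_right (mem_Icc.mp hk).2 : Icc 1 k ⊆ Icc 1 n) b hd
        simpa only [Nat.card_Icc, Nat.add_sub_cancel] using this
    _ = _ := by rw [sum_const, Nat.card_Icc, Nat.add_sub_cancel, nsmul_eq_mul]

theorem tendsto_rpow_mul_exp_neg_mul_rpow_atTop_nhds_zero (p : ℝ) {q c : ℝ} (hq : 0 < q)
    (hc : 0 < c) : Tendsto (fun x : ℝ => x ^ p * exp (-c * x ^ q)) atTop (nhds 0) := by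
  refine ((tendsto_rpow_mul_exp_neg_mul_atTop_nhds_zero (p / q) c hc).comp
    (tendsto_rpow_atTop hq)).congr' ?_
  filter_upwards [eventually_ge_atTop 0] with x hx
  simp only [Function.comp_apply, ← rpow_mul hx, mul_div_cancel₀ p hq.ne']

theorem card_filter_exists_rpow_lt_abs_card_inter_Icc_sub_div_le {n b : ℕ} (hbn : b ≤ n)
    (hn : 16 ≤ n) {ε : ℝ} (hε : 0 ≤ ε) :
    (#{S ∈ (Icc 1 n).powersetCard b | ∃ k ∈ Icc 1 n,
        (n : ℝ) ^ ((1 : ℝ) / 2 + ε) < |(#(S ∩ Icc 1 k) : ℝ) - k * b / n|} : ℝ) /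
        (#((Icc 1 n).powersetCard b) : ℝ) ≤
      4 * ((n : ℝ) ^ (2 : ℝ) * exp (-(1 / 8) * (n : ℝ) ^ (2 * ε))) := by
  have hn' : (16 : ℝ) ≤ n := by exact_mod_cast hn
  have hn0 : (0 : ℝ) < n := by linarith
  have hd : 4 ≤ (n : ℝ) ^ ((1 : ℝ) / 2 + ε) := calc
    (4 : ℝ) = (16 : ℝ) ^ ((1 : ℝ) / 2) := by
      rw [show (16 : ℝ) = 4 ^ (2 : ℝ) by norm_num, ← rpow_mul (by norm_num)]; norm_num
    _ ≤ (n : ℝ) ^ ((1 : ℝ) / 2) := by gcongr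
    _ ≤ (n : ℝ) ^ ((1 : ℝ) / 2 + ε) :=
      rpow_le_rpow_of_exponent_le (by linarith) (by linarith)
  have hexponent :
      ((n : ℝ) ^ ((1 : ℝ) / 2 + ε)) ^ 2 / (8 * n) = 1 / 8 * (n : ℝ) ^ (2 * ε) := by
    rw [← rpow_natCast, ← rpow_mul hn0.le,
      show ((1 : ℝ) / 2 + ε) * (2 : ℕ) = 1 + 2 * ε by push_cast; ring, rpow_add hn0, rpow_one]
    field_simp
  have hC : (0 : ℝ) < n.choose b := by exact_mod_cast Nat.choose_pos hbn
  rw [card_powersetCard, Nat.card_Icc, Nat.add_sub_cancel, div_le_iff₀ hC]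
  refine (card_filter_exists_lt_abs_card_inter_Icc_sub_le n b hd).trans ?_
  rw [hexponent, rpow_two, neg_mul]
  have hb : (b : ℝ) + 1 ≤ 2 * n := by
    have : (b : ℝ) ≤ n := by exact_mod_cast hbn
    linarith
  calc (n : ℝ) * (2 * ((b + 1) * (exp (-(1 / 8 * (n : ℝ) ^ (2 * ε))) * n.choose b)))
      = 2 * n * (b + 1) * (exp (-(1 / 8 * (n : ℝ) ^ (2 * ε))) * n.choose b) := by ring
    _ ≤ 2 * n * (2 * n) * (exp (-(1 / 8 * (n : ℝ) ^ (2 * ε))) * n.choose b) := by gcongr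
    _ = _ := by ring

theorem statement12_general (ε : ℝ) (hε : 0 < ε)
    (a b : ℕ → ℕ)
    (ha : Tendsto a atTop atTop) :
    Tendsto
      (fun N =>
        ((((Finset.Icc 1 (a N + b N)).powersetCard (b N)).filter
            (fun S => ∃ k ∈ Finset.Icc 1 (a N + b N),
              ((a N + b N : ℕ) : ℝ) ^ ((1 : ℝ) / 2 + ε) <
                |((S ∩ Finset.Icc 1 k).card : ℝ) -
                  (k : ℝ) * (b N : ℝ) / ((a N + b N : ℕ) : ℝ)|)).card : ℝ) /
          ((((Finset.Icc 1 (a N + b N)).powersetCard (b N)).card : ℕ) : ℝ))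
      atTop (nhds 0) := by
  have hn : Tendsto (fun N => a N + b N) atTop atTop :=
    tendsto_atTop_mono (fun N => Nat.le_add_right _ _) ha
  have hbound := ((tendsto_rpow_mul_exp_neg_mul_rpow_atTop_nhds_zero 2
    (by positivity : 0 < 2 * ε) (by norm_num : (0 : ℝ) < 1 / 8)).const_mul 4).comp
      (tendsto_natCast_atTop_atTop.comp hn)
  rw [mul_zero] at hbound
  refine squeeze_zero' (Eventually.of_forall fun N => by positivity) ?_ hbound
  filter_upwards [hn.eventually_ge_atTop 16] with N hN
  exact card_filter_exists_rpow_lt_abs_card_inter_Icc_sub_div_le (Nat.le_add_left _ _) hN hε.le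

/-- Fix `t ∈ (0,∞)` and `ε ∈ (0,1/2)`.  Let `(a_N)`, `(b_N)`
be sequences of natural numbers with `a_N → ∞` and `b_N/a_N → t`, and set
`n_N = a_N + b_N`.  Let `S_N` be a uniformly distributed random `b_N`-element
subset of `{1,…,n_N}`.  Then the probability that there is a
`k ∈ {1,…,n_N}` with `| #(S_N ∩ {1,…,k}) − k·b_N/n_N | > n_N^{1/2+ε}` tends to
`0` as `N → ∞`. -/
theorem statement12 (t ε : ℝ) (ht : 0 < t) (hε : 0 < ε) (hε' : ε < 1 / 2)
    (a b : ℕ → ℕ)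
    (ha : Tendsto a atTop atTop)
    (hb : Tendsto (fun N => (b N : ℝ) / (a N : ℝ)) atTop (nhds t)) :
    Tendsto
      (fun N =>
        ((((Finset.Icc 1 (a N + b N)).powersetCard (b N)).filter
            (fun S => ∃ k ∈ Finset.Icc 1 (a N + b N),
              ((a N + b N : ℕ) : ℝ) ^ ((1 : ℝ) / 2 + ε) <
                |((S ∩ Finset.Icc 1 k).card : ℝ) -
                  (k : ℝ) * (b N : ℝ) / ((a N + b N : ℕ) : ℝ)|)).card : ℝ) /
          ((((Finset.Icc 1 (a N + b N)).powersetCard (b N)).card : ℕ) : ℝ))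
      atTop (nhds 0) :=
  statement12_general ε hε a b ha
end

section
/- For every subset T ⊆ Λ, let D(T) = { {x,y} ∈ E_Λ : exactly one of x, y lies in T }. Then μ({σ ∈ Ω_Λ^η : D(T) ⊆ B(σ)}) ≤ exp(−2β·|D(T)|). -/
/-!
Flipping every spin in `T` maps a configuration `σ` to `σ'` and is injective. On an edge of
`D(T)` it reverses the sign of `σ_x σ_y`, elsewhere it changes nothing. If all edges of `D(T)`
are contour edges of `σ`, they all become satisfied in `σ'`, so `H(σ') = H(σ) - 2|D(T)|`; hence
the weight of `σ` is `exp(-2β|D(T)|)` times the weight of `σ'`, and summing over the event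
bounds its mass by `exp(-2β|D(T)|) Z`.
-/

open scoped symmDiff

namespace Peierls

variable {V : Type*} [DecidableEq V]

def flipOn (T : Finset V) (σ : V → ℝ) (x : V) : ℝ := if x ∈ T then -σ x else σ x

theorem flipOn_mul_flipOn (T : Finset V) (σ : V → ℝ) (e : V × V) :
    flipOn T σ e.1 * flipOn T σ e.2 =
      σ e.1 * σ e.2 -
        2 * (if (e.1 ∈ T ∧ e.2 ∉ T) ∨ (e.1 ∉ T ∧ e.2 ∈ T) then σ e.1 * σ e.2 else 0) := by
  unfold flipOn
  by_cases h1 : e.1 ∈ T <;> by_cases h2 : e.2 ∈ T <;> simp [h1, h2] <;> ring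

theorem sum_flipOn_mul_flipOn (E : Finset (V × V)) (T : Finset V) (σ : V → ℝ)
    (hcut : ∀ e ∈ E.filter (fun e => (e.1 ∈ T ∧ e.2 ∉ T) ∨ (e.1 ∉ T ∧ e.2 ∈ T)),
      σ e.1 * σ e.2 = -1) :
    ∑ e ∈ E, flipOn T σ e.1 * flipOn T σ e.2 =
      ∑ e ∈ E, σ e.1 * σ e.2 +
        2 * (E.filter (fun e => (e.1 ∈ T ∧ e.2 ∉ T) ∨ (e.1 ∉ T ∧ e.2 ∈ T))).card := by
  simp_rw [flipOn_mul_flipOn, Finset.sum_sub_distrib, ← Finset.mul_sum, ← Finset.sum_filter,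
    Finset.sum_congr rfl hcut]
  simp only [Finset.sum_const, nsmul_eq_mul, mul_neg, mul_one]
  ring

theorem mul_eq_neg_one_of_ne {a b : ℝ} (ha : a = 1 ∨ a = -1) (hb : b = 1 ∨ b = -1)
    (hab : a ≠ b) : a * b = -1 := by
  rcases ha with rfl | rfl <;> rcases hb with rfl | rfl <;> first | exact absurd rfl hab | norm_num

theorem sum_le_mul_sum_of_injOn {ι : Type*} [DecidableEq ι] {S U : Finset ι} (f : ι → ι) (w : ι → ℝ) {c : ℝ}
    (hc : 0 ≤ c) (hw : ∀ i ∈ U, 0 ≤ w i) (hf : Set.InjOn f S) (hfU : ∀ i ∈ S, f i ∈ U)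
    (hwf : ∀ i ∈ S, w i = c * w (f i)) :
    ∑ i ∈ S, w i ≤ c * ∑ i ∈ U, w i := by
  calc ∑ i ∈ S, w i = c * ∑ i ∈ S.image f, w i := by
        rw [Finset.sum_congr rfl hwf, ← Finset.mul_sum, Finset.sum_image hf]
    _ ≤ c * ∑ i ∈ U, w i := by
        refine mul_le_mul_of_nonneg_left
          (Finset.sum_le_sum_of_subset_of_nonneg ?_ fun i hi _ => hw i hi) hc
        intro j hj
        obtain ⟨i, hi, rfl⟩ := Finset.mem_image.mp hj
        exact hfU i hi

end Peierls

open Peierls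

theorem statement13_general
    (Λ : Finset (ℤ × ℤ)) (η : ℤ × ℤ → ℝ) (hη : ∀ x, η x = 1 ∨ η x = -1)
    (E : Finset ((ℤ × ℤ) × (ℤ × ℤ)))
    (β : ℝ)
    (spin : Finset (ℤ × ℤ) → (ℤ × ℤ) → ℝ)
    (hspin : ∀ P x, spin P x =
      if x ∈ Λ then (if x ∈ P then 1 else -1) else η x)
    (H : Finset (ℤ × ℤ) → ℝ)
    (hH : ∀ P, H P = -∑ e ∈ E, spin P e.1 * spin P e.2)
    (Bset : Finset (ℤ × ℤ) → Finset ((ℤ × ℤ) × (ℤ × ℤ)))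
    (hBset : ∀ P, Bset P = E.filter (fun e => spin P e.1 ≠ spin P e.2))
    (Z : ℝ) (hZ : Z = ∑ P ∈ Λ.powerset, Real.exp (-β * H P))
    (T : Finset (ℤ × ℤ)) (hT : T ⊆ Λ)
    (D : Finset ((ℤ × ℤ) × (ℤ × ℤ)))
    (hD : D = E.filter (fun e =>
      (e.1 ∈ T ∧ e.2 ∉ T) ∨ (e.1 ∉ T ∧ e.2 ∈ T))) :
    (∑ P ∈ Λ.powerset.filter (fun P => D ⊆ Bset P), Real.exp (-β * H P)) / Z ≤
      Real.exp (-2 * β * (D.card : ℝ)) := by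
  have hspin_pm : ∀ P x, spin P x = 1 ∨ spin P x = -1 := by
    intro P x; rw [hspin]; split_ifs <;> simp [hη x]
  have hspin_flip : ∀ P, spin (P ∆ T) = flipOn T (spin P) := by
    intro P; ext x
    rw [flipOn, hspin, hspin]
    by_cases hxT : x ∈ T
    · by_cases hxP : x ∈ P <;> simp [hxT, hxP, hT hxT, Finset.mem_symmDiff]
    · simp [hxT, Finset.mem_symmDiff]
  have hH_flip : ∀ P, D ⊆ Bset P → H (P ∆ T) = H P - 2 * D.card := by
    intro P hP
    have hcut : ∀ e ∈ D, spin P e.1 * spin P e.2 = -1 := fun e he =>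
      have hdisagree : e ∈ E.filter (fun e => spin P e.1 ≠ spin P e.2) := hBset P ▸ hP he
      mul_eq_neg_one_of_ne (hspin_pm P _) (hspin_pm P _) (Finset.mem_filter.mp hdisagree).2
    rw [hH, hH, hspin_flip, sum_flipOn_mul_flipOn E T _ (hD ▸ hcut), ← hD]
    ring
  have hZ_pos : 0 < Z := hZ ▸ Finset.sum_pos (fun P _ => Real.exp_pos _)
    ⟨∅, Finset.empty_mem_powerset _⟩
  rw [div_le_iff₀ hZ_pos, hZ]
  refine sum_le_mul_sum_of_injOn (· ∆ T) _ (Real.exp_pos _).le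
    (fun _ _ => (Real.exp_pos _).le) (symmDiff_left_injective T).injOn ?_ ?_
  · intro P hP
    exact Finset.mem_powerset.mpr (symmDiff_le_sup.trans
      (sup_le (Finset.mem_powerset.mp (Finset.mem_filter.mp hP).1) hT))
  · intro P hP
    rw [hH_flip P (Finset.mem_filter.mp hP).2, ← Real.exp_add]
    ring_nf

/-- **Peierls estimate for a prescribed edge set.**
`Λ ⊂ ℤ²` is a finite set with boundary condition `η : ℤ² → {−1,+1}`.
Configurations in `Ω_Λ^η` (spin functions equal to `η` off `Λ`) are
parametrized by their plus-set `P ⊆ Λ` via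
`σ_P x = (if x ∈ Λ then (if x ∈ P then 1 else −1) else η x)`.
`E` is the set of nearest-neighbor edges of `ℤ²` with at least one endpoint in
`Λ` (each unordered pair recorded once, oriented to the right or upwards),
`H` is the Ising energy, `B(σ)` the Peierls contour-edge set, `μ` the Gibbs
measure with weights `exp(−βH)/Z`.  For `T ⊆ Λ` with
`D(T) = { {x,y} ∈ E_Λ : exactly one of x,y lies in T }`, one has
`μ({σ : D(T) ⊆ B(σ)}) ≤ exp(−2β·|D(T)|)`. -/
theorem statement13
    (Λ : Finset (ℤ × ℤ)) (η : ℤ × ℤ → ℝ) (hη : ∀ x, η x = 1 ∨ η x = -1)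
    (E : Finset ((ℤ × ℤ) × (ℤ × ℤ)))
    (hE : ∀ e : (ℤ × ℤ) × (ℤ × ℤ), e ∈ E ↔
      (e.2 = e.1 + ((1 : ℤ), (0 : ℤ)) ∨ e.2 = e.1 + ((0 : ℤ), (1 : ℤ))) ∧
      (e.1 ∈ Λ ∨ e.2 ∈ Λ))
    (β : ℝ) (hβ : 0 < β)
    (spin : Finset (ℤ × ℤ) → (ℤ × ℤ) → ℝ)
    (hspin : ∀ P x, spin P x =
      if x ∈ Λ then (if x ∈ P then 1 else -1) else η x)
    (H : Finset (ℤ × ℤ) → ℝ)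
    (hH : ∀ P, H P = -∑ e ∈ E, spin P e.1 * spin P e.2)
    (Bset : Finset (ℤ × ℤ) → Finset ((ℤ × ℤ) × (ℤ × ℤ)))
    (hBset : ∀ P, Bset P = E.filter (fun e => spin P e.1 ≠ spin P e.2))
    (Z : ℝ) (hZ : Z = ∑ P ∈ Λ.powerset, Real.exp (-β * H P))
    (T : Finset (ℤ × ℤ)) (hT : T ⊆ Λ)
    (D : Finset ((ℤ × ℤ) × (ℤ × ℤ)))
    (hD : D = E.filter (fun e =>
      (e.1 ∈ T ∧ e.2 ∉ T) ∨ (e.1 ∉ T ∧ e.2 ∈ T))) :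
    (∑ P ∈ Λ.powerset.filter (fun P => D ⊆ Bset P), Real.exp (-β * H P)) / Z ≤
      Real.exp (-2 * β * (D.card : ℝ)) :=
  statement13_general Λ η hη E β spin hspin H hH Bset hBset Z hZ T hT D hD
end

section
/- For any two configurations σ₀, τ ∈ Ω_Λ^η one has μ({σ ∈ Ω_Λ^η : B(σ₀) ⊆ B(σ)}) ≤ exp(−2β·(|B(σ₀)| − |B(τ)|)). In particular, taking τ to be a configuration minimizing |B(·)| over Ω_Λ^η (a ground state), the probability that the contour-edge set of σ contains a prescribed realizable contour collection of total length ℓ is at most exp(−2β·(ℓ − ℓ_min)), where ℓ_min is the minimal total contour length compatible with the boundary condition η. -/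
/-!
Flip the configuration on `T = P₀ ∆ Pτ`. Since spins are `±1`, flipping on `T` toggles exactly the
edges of the edge boundary of `T`, a set independent of the configuration; comparing `P₀` with
`P₀ ∆ T = Pτ` identifies it as `B(P₀) ∆ B(Pτ)`. If `B(P₀) ⊆ B(P)`, then
`|B(P ∆ T)| ≤ |B(P)| - |B(P₀)| + |B(Pτ)|`, and as `H = 2|B| - |E|` the flip multiplies the Gibbs
weight by at least `exp(2β(|B(P₀)| - |B(Pτ)|))`. The flip is injective, so summing over the event
bounds its weight by that factor times `Z`.
-/

open scoped symmDiff

open Finset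

theorem Finset.sum_le_mul_sum_of_mapsTo_of_injOn {ι κ R : Type*} [DecidableEq κ]
    [CommSemiring R] [PartialOrder R] [IsOrderedRing R] {s : Finset ι} {t : Finset κ} {f : ι → κ}
    {w : ι → R} {v : κ → R} {C : R}
    (hmaps : Set.MapsTo f s t) (hinj : Set.InjOn f s) (hC : 0 ≤ C) (hv : ∀ j ∈ t, 0 ≤ v j)
    (h : ∀ i ∈ s, w i ≤ C * v (f i)) : ∑ i ∈ s, w i ≤ C * ∑ j ∈ t, v j :=
  calc ∑ i ∈ s, w i ≤ C * ∑ i ∈ s, v (f i) := by rw [mul_sum]; exact sum_le_sum h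
    _ = C * ∑ j ∈ s.image f, v j := by rw [sum_image hinj]
    _ ≤ C * ∑ j ∈ t, v j :=
      mul_le_mul_of_nonneg_left
        (sum_le_sum_of_subset_of_nonneg (image_subset_iff.2 hmaps) fun j hj _ => hv j hj) hC

theorem Finset.card_symmDiff_symmDiff_add_card_le {α : Type*} [DecidableEq α] {A X : Finset α}
    (B : Finset α) (hAX : A ⊆ X) : #(X ∆ (A ∆ B)) + #A ≤ #X + #B := by
  have hsymm : X ∆ (A ∆ B) = (X \ A) ∆ B := by
    rw [← symmDiff_assoc, symmDiff_comm X, symmDiff_of_le hAX]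
  have hsdiff := card_sdiff_add_card_eq_card hAX
  have hle : #((X \ A) ∆ B) ≤ #(X \ A) + #B :=
    (card_le_card symmDiff_le_sup).trans (card_union_le _ _)
  rw [hsymm]
  omega

section Contours

variable {α : Type*}

noncomputable def contourEdges (E : Finset (α × α)) (s : α → ℝ) : Finset (α × α) :=
  E.filter fun e => s e.1 ≠ s e.2

def isingEnergy (E : Finset (α × α)) (s : α → ℝ) : ℝ :=
  -∑ e ∈ E, s e.1 * s e.2

theorem mul_eq_one_sub_two_mul_ite {a b : ℝ} (ha : a = 1 ∨ a = -1) (hb : b = 1 ∨ b = -1) :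
    a * b = 1 - 2 * if a ≠ b then 1 else 0 := by
  rcases ha with rfl | rfl <;> rcases hb with rfl | rfl <;> norm_num

theorem isingEnergy_eq {E : Finset (α × α)} {s : α → ℝ} (hs : ∀ x, s x = 1 ∨ s x = -1) :
    isingEnergy E s = 2 * #(contourEdges E s) - #E := by
  simp only [isingEnergy, contourEdges,
    fun e : α × α => mul_eq_one_sub_two_mul_ite (hs e.1) (hs e.2), sum_sub_distrib,
    ← mul_sum, sum_boole, sum_const, nsmul_eq_mul, mul_one]
  ring

variable [DecidableEq α]

def edgeBoundary (E : Finset (α × α)) (T : Finset α) : Finset (α × α) :=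
  E.filter fun e => ¬(e.1 ∈ T ↔ e.2 ∈ T)

noncomputable def flipOn (T : Finset α) (s : α → ℝ) (x : α) : ℝ :=
  if x ∈ T then -s x else s x

theorem contourEdges_flipOn {E : Finset (α × α)} {s : α → ℝ} (T : Finset α)
    (hs : ∀ x, s x = 1 ∨ s x = -1) :
    contourEdges E (flipOn T s) = contourEdges E s ∆ edgeBoundary E T := by
  ext e
  unfold contourEdges edgeBoundary flipOn
  rw [mem_symmDiff, mem_filter, mem_filter, mem_filter]
  rcases hs e.1 with h1 | h1 <;> rcases hs e.2 with h2 | h2 <;>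
    by_cases t1 : e.1 ∈ T <;> by_cases t2 : e.2 ∈ T <;> simp [h1, h2, t1, t2] <;> norm_num

end Contours

section Ising

variable {α : Type*} [DecidableEq α]

def isingSpin (Λ : Finset α) (η : α → ℝ) (P : Finset α) (x : α) : ℝ :=
  if x ∈ Λ then (if x ∈ P then 1 else -1) else η x

variable {Λ : Finset α} {η : α → ℝ}

theorem isingSpin_eq_one_or_eq_neg_one (hη : ∀ x, η x = 1 ∨ η x = -1) (P : Finset α) (x : α) :
    isingSpin Λ η P x = 1 ∨ isingSpin Λ η P x = -1 := by
  unfold isingSpin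
  split_ifs
  exacts [Or.inl rfl, Or.inr rfl, hη x]

theorem isingSpin_symmDiff {P T : Finset α} (hT : T ⊆ Λ) :
    isingSpin Λ η (P ∆ T) = flipOn T (isingSpin Λ η P) := by
  ext x
  unfold isingSpin flipOn
  by_cases hxT : x ∈ T
  · by_cases hxP : x ∈ P <;> simp [hxT, hxP, hT hxT, mem_symmDiff]
  · simp [hxT, mem_symmDiff]

theorem contourEdges_isingSpin_symmDiff (hη : ∀ x, η x = 1 ∨ η x = -1) (E : Finset (α × α))
    {P₀ P₁ : Finset α} (h₀ : P₀ ⊆ Λ) (h₁ : P₁ ⊆ Λ) (P : Finset α) :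
    contourEdges E (isingSpin Λ η (P ∆ (P₀ ∆ P₁))) =
      contourEdges E (isingSpin Λ η P) ∆
        (contourEdges E (isingSpin Λ η P₀) ∆ contourEdges E (isingSpin Λ η P₁)) := by
  have hflip : ∀ Q, contourEdges E (isingSpin Λ η (Q ∆ (P₀ ∆ P₁))) =
      contourEdges E (isingSpin Λ η Q) ∆ edgeBoundary E (P₀ ∆ P₁) := fun Q => by
    rw [isingSpin_symmDiff (symmDiff_le_sup.trans (sup_le h₀ h₁)),
      contourEdges_flipOn _ (isingSpin_eq_one_or_eq_neg_one hη Q)]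
  rw [hflip]
  congr 1
  rw [← symmDiff_symmDiff_cancel_left (contourEdges E (isingSpin Λ η P₀)) (edgeBoundary E _),
    ← hflip P₀, symmDiff_symmDiff_cancel_left]

theorem isingPeierls_bound (hη : ∀ x, η x = 1 ∨ η x = -1) (E : Finset (α × α)) {β : ℝ}
    (hβ : 0 ≤ β) {P₀ P₁ : Finset α} (h₀ : P₀ ⊆ Λ) (h₁ : P₁ ⊆ Λ) :
    ∑ P ∈ Λ.powerset.filter
        (fun P => contourEdges E (isingSpin Λ η P₀) ⊆ contourEdges E (isingSpin Λ η P)),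
      Real.exp (-β * isingEnergy E (isingSpin Λ η P)) ≤
    Real.exp (-2 * β * ((#(contourEdges E (isingSpin Λ η P₀)) : ℝ) -
        #(contourEdges E (isingSpin Λ η P₁)))) *
      ∑ P ∈ Λ.powerset, Real.exp (-β * isingEnergy E (isingSpin Λ η P)) := by
  refine sum_le_mul_sum_of_mapsTo_of_injOn (f := (· ∆ (P₀ ∆ P₁))) ?_
    (symmDiff_left_injective _).injOn (Real.exp_pos _).le (fun _ _ => (Real.exp_pos _).le) ?_
  · intro P hP
    rw [mem_coe, mem_filter, mem_powerset] at hP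
    rw [mem_coe, mem_powerset]
    exact symmDiff_le_sup.trans (sup_le hP.1 (symmDiff_le_sup.trans (sup_le h₀ h₁)))
  · intro P hP
    have hcard := card_symmDiff_symmDiff_add_card_le (contourEdges E (isingSpin Λ η P₁))
      (mem_filter.1 hP).2
    rw [← contourEdges_isingSpin_symmDiff hη E h₀ h₁] at hcard
    have hcard' := (Nat.cast_le (α := ℝ)).2 hcard
    push_cast at hcard'
    rw [← Real.exp_add, Real.exp_le_exp,
      isingEnergy_eq (isingSpin_eq_one_or_eq_neg_one hη _),
      isingEnergy_eq (isingSpin_eq_one_or_eq_neg_one hη _)]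
    nlinarith

end Ising

theorem statement14_general
    (Λ : Finset (ℤ × ℤ)) (η : ℤ × ℤ → ℝ) (hη : ∀ x, η x = 1 ∨ η x = -1)
    (E : Finset ((ℤ × ℤ) × (ℤ × ℤ)))
    (β : ℝ) (hβ : 0 < β)
    (spin : Finset (ℤ × ℤ) → (ℤ × ℤ) → ℝ)
    (hspin : ∀ P x, spin P x =
      if x ∈ Λ then (if x ∈ P then 1 else -1) else η x)
    (H : Finset (ℤ × ℤ) → ℝ)
    (hH : ∀ P, H P = -∑ e ∈ E, spin P e.1 * spin P e.2)
    (Bset : Finset (ℤ × ℤ) → Finset ((ℤ × ℤ) × (ℤ × ℤ)))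
    (hBset : ∀ P, Bset P = E.filter (fun e => spin P e.1 ≠ spin P e.2))
    (Z : ℝ) (hZ : Z = ∑ P ∈ Λ.powerset, Real.exp (-β * H P)) :
    (∀ P₀ ∈ Λ.powerset, ∀ Pτ ∈ Λ.powerset,
      (∑ P ∈ Λ.powerset.filter (fun P => Bset P₀ ⊆ Bset P),
          Real.exp (-β * H P)) / Z ≤
        Real.exp (-2 * β * (((Bset P₀).card : ℝ) - ((Bset Pτ).card : ℝ)))) ∧
    (∀ P₀ ∈ Λ.powerset, ∀ ℓmin : ℕ,
      (∃ Pτ ∈ Λ.powerset, (Bset Pτ).card = ℓmin) →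
      (∀ P ∈ Λ.powerset, ℓmin ≤ (Bset P).card) →
      (∑ P ∈ Λ.powerset.filter (fun P => Bset P₀ ⊆ Bset P),
          Real.exp (-β * H P)) / Z ≤
        Real.exp (-2 * β * (((Bset P₀).card : ℝ) - (ℓmin : ℝ)))) := by
  obtain rfl : spin = isingSpin Λ η := funext fun P => funext (hspin P)
  obtain rfl : H = fun P => isingEnergy E (isingSpin Λ η P) := funext hH
  obtain rfl : Bset = fun P => contourEdges E (isingSpin Λ η P) := funext hBset
  have hZpos : 0 < Z := hZ ▸ sum_pos (fun P _ => Real.exp_pos _) ⟨∅, empty_mem_powerset Λ⟩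
  have peierls P₀ (h₀ : P₀ ∈ Λ.powerset) Pτ (hτ : Pτ ∈ Λ.powerset) := (div_le_iff₀ hZpos).2
    (hZ ▸ isingPeierls_bound hη E hβ.le (mem_powerset.1 h₀) (mem_powerset.1 hτ))
  exact ⟨peierls, fun P₀ h₀ ℓmin ⟨Pτ, hτ, hℓ⟩ _ => hℓ ▸ peierls P₀ h₀ Pτ hτ⟩

/-- **Peierls-map estimate, Lemma of Section 5.**
In the same finite-volume Ising setting as Statement 13 (configurations
`σ ∈ Ω_Λ^η` parametrized by their plus-set `P ⊆ Λ`): for any two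
configurations `σ₀, τ ∈ Ω_Λ^η`,
`μ({σ : B(σ₀) ⊆ B(σ)}) ≤ exp(−2β(|B(σ₀)| − |B(τ)|))`.
In particular, taking `τ` a ground state (minimizing `|B(·)|`), the
probability that the contour-edge set of `σ` contains a prescribed realizable
contour collection of total length `ℓ = |B(σ₀)|` is at most
`exp(−2β(ℓ − ℓ_min))`, with `ℓ_min` the minimal total contour length
compatible with the boundary condition `η`. -/
theorem statement14
    (Λ : Finset (ℤ × ℤ)) (η : ℤ × ℤ → ℝ) (hη : ∀ x, η x = 1 ∨ η x = -1)
    (E : Finset ((ℤ × ℤ) × (ℤ × ℤ)))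
    (hE : ∀ e : (ℤ × ℤ) × (ℤ × ℤ), e ∈ E ↔
      (e.2 = e.1 + ((1 : ℤ), (0 : ℤ)) ∨ e.2 = e.1 + ((0 : ℤ), (1 : ℤ))) ∧
      (e.1 ∈ Λ ∨ e.2 ∈ Λ))
    (β : ℝ) (hβ : 0 < β)
    (spin : Finset (ℤ × ℤ) → (ℤ × ℤ) → ℝ)
    (hspin : ∀ P x, spin P x =
      if x ∈ Λ then (if x ∈ P then 1 else -1) else η x)
    (H : Finset (ℤ × ℤ) → ℝ)
    (hH : ∀ P, H P = -∑ e ∈ E, spin P e.1 * spin P e.2)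
    (Bset : Finset (ℤ × ℤ) → Finset ((ℤ × ℤ) × (ℤ × ℤ)))
    (hBset : ∀ P, Bset P = E.filter (fun e => spin P e.1 ≠ spin P e.2))
    (Z : ℝ) (hZ : Z = ∑ P ∈ Λ.powerset, Real.exp (-β * H P)) :
    (∀ P₀ ∈ Λ.powerset, ∀ Pτ ∈ Λ.powerset,
      (∑ P ∈ Λ.powerset.filter (fun P => Bset P₀ ⊆ Bset P),
          Real.exp (-β * H P)) / Z ≤
        Real.exp (-2 * β * (((Bset P₀).card : ℝ) - ((Bset Pτ).card : ℝ)))) ∧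
    (∀ P₀ ∈ Λ.powerset, ∀ ℓmin : ℕ,
      (∃ Pτ ∈ Λ.powerset, (Bset Pτ).card = ℓmin) →
      (∀ P ∈ Λ.powerset, ℓmin ≤ (Bset P).card) →
      (∑ P ∈ Λ.powerset.filter (fun P => Bset P₀ ⊆ Bset P),
          Real.exp (-β * H P)) / Z ≤
        Real.exp (-2 * β * (((Bset P₀).card : ℝ) - (ℓmin : ℝ)))) :=
  statement14_general Λ η hη E β hβ spin hspin H hH Bset hBset Z hZ
end
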